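/- arXiv:1811.00929 — 10 statements merged into one kernel-verified Lean document; each statement's English description precedes it below -/
import Mathlib

section
/- Let α ∈ (0, 1/2) and define f(x) = -(log(6/x))^α for x ∈ (0,2). Then the Gagliardo H^{1/2}-seminorm of f on the interval (0,2) is finite, i.e. the double integral ∫₀² ∫₀² (f(x) - f(y))² / (x - y)² dx dy is finite. -/
/-!
For `y < x` in `(0, 2)` write `L = log (6 / ·)`, so that `0 < L x ≤ L y` and
`L y - L x = log (x / y)`. Concavity of `t ↦ t ^ α` gives
`|f x - f y| ≤ α L(x)^(α-1) log (x / y)`, and `log (x / y)² / (x - y)² ≤ 16 / (x √x √y)`.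
Integrating in `y` over `(0, x)` leaves `32 α² L(x)^(2α-2) / x`, which is integrable at `0` because
`2α - 2 < -1`: it is the derivative of the bounded monotone function `L^(2α-1) / (1 - 2α)`.
By symmetry of the integrand, twice the integral over `{y < x}` is the whole double integral.
-/

open MeasureTheory Set Real
open scoped ENNReal

lemma rpow_sub_rpow_le_mul_sub {p a b : ℝ} (hp0 : 0 ≤ p) (hp1 : p ≤ 1) (hb : 0 < b)
    (hba : b ≤ a) : a ^ p - b ^ p ≤ p * b ^ (p - 1) * (a - b) := by
  have hs : -1 ≤ (a - b) / b := by
    rw [le_div_iff₀ hb]; linarith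
  have ha : a = b * (1 + (a - b) / b) := by field_simp; ring
  calc a ^ p - b ^ p = b ^ p * (1 + (a - b) / b) ^ p - b ^ p := by
        rw [← mul_rpow hb.le (by linarith), ← ha]
    _ ≤ b ^ p * (1 + p * ((a - b) / b)) - b ^ p := by
        gcongr; exact rpow_one_add_le_one_add_mul_self hs hp0 hp1
    _ = p * b ^ (p - 1) * (a - b) := by rw [rpow_sub_one hb.ne']; field_simp; ring

lemma log_sq_mul_sqrt_le {t : ℝ} (ht0 : 0 < t) (ht1 : t ≤ 1) :
    log t ^ 2 * √t ≤ 16 * (1 - t) ^ 2 := by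
  set r := √√t
  have hr0 : 0 < r := by positivity
  have hr1 : r ≤ 1 := sqrt_le_one.2 (sqrt_le_one.2 ht1)
  have hr2 : r ^ 2 = √t := sq_sqrt (sqrt_nonneg t)
  have htr : t = r ^ 4 := by rw [show 4 = 2 * 2 from rfl, pow_mul, hr2, sq_sqrt ht0.le]
  have hlog : log t = 4 * log r := by rw [htr, log_pow]; norm_num
  have hneg : -log r * r ≤ 1 - r := by
    have := log_le_sub_one_of_pos (inv_pos.2 hr0)
    rw [log_inv] at this
    have := mul_le_mul_of_nonneg_right this hr0.le
    rwa [sub_mul, inv_mul_cancel₀ hr0.ne', one_mul] at this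
  have hr4 : 1 - r ≤ 1 - t := by
    rw [htr]; nlinarith [pow_le_one₀ hr0.le hr1 (n := 3)]
  have hlogr : 0 ≤ -log r := neg_nonneg.2 (log_nonpos hr0.le hr1)
  rw [← hr2, hlog]
  nlinarith [mul_nonneg hlogr hr0.le]

lemma log_div_sq_div_sub_sq_le {x y : ℝ} (hy : 0 < y) (hyx : y ≤ x) :
    log (x / y) ^ 2 / (x - y) ^ 2 ≤ 16 / (x * √x * √y) := by
  have hx : 0 < x := hy.trans_le hyx
  rcases hyx.eq_or_lt with rfl | hlt
  · simp only [sub_self, ne_eq, OfNat.ofNat_ne_zero, not_false_eq_true, zero_pow, div_zero]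
    positivity
  have h := log_sq_mul_sqrt_le (div_pos hy hx) ((div_le_one hx).2 hyx)
  rw [log_div hy.ne' hx.ne', ← neg_sub, neg_sq, ← log_div hx.ne' hy.ne',
    sqrt_div' _ hx.le] at h
  have hsx : 0 < √x := sqrt_pos.2 hx
  have hxx : √x * √x = x := mul_self_sqrt hx.le
  rw [div_le_div_iff₀ (by nlinarith) (by positivity)]
  calc log (x / y) ^ 2 * (x * √x * √y) = log (x / y) ^ 2 * (√y / √x) * x ^ 2 := by
        field_simp
        linear_combination log (x / y) ^ 2 * hxx
    _ ≤ 16 * (1 - y / x) ^ 2 * x ^ 2 := by gcongr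
    _ = 16 * (x - y) ^ 2 := by field_simp

lemma rpow_log_div_sub_sq_le {α c x y : ℝ} (hα0 : 0 ≤ α) (hα1 : α ≤ 1) (hy : 0 < y)
    (hyx : y ≤ x) (hxc : x < c) :
    (log (c / y) ^ α - log (c / x) ^ α) ^ 2
      ≤ α ^ 2 * log (c / x) ^ (2 * α - 2) * log (x / y) ^ 2 := by
  have hx : 0 < x := hy.trans_le hyx
  have hLx : 0 < log (c / x) := log_pos ((one_lt_div hx).2 hxc)
  have hdiff : log (c / y) - log (c / x) = log (x / y) := by
    have hc : 0 < c := hx.trans hxc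
    rw [log_div hc.ne' hy.ne', log_div hc.ne' hx.ne', log_div hx.ne' hy.ne']
    ring
  have hle : log (c / x) ≤ log (c / y) := by
    linarith [log_nonneg ((one_le_div hy).2 hyx)]
  have hsq : (log (c / x) ^ (α - 1)) ^ 2 = log (c / x) ^ (2 * α - 2) := by
    rw [← rpow_natCast, ← rpow_mul hLx.le]; ring_nf
  calc (log (c / y) ^ α - log (c / x) ^ α) ^ 2
      ≤ (α * log (c / x) ^ (α - 1) * log (x / y)) ^ 2 := by
        rw [← hdiff]
        exact pow_le_pow_left₀ (sub_nonneg.2 (rpow_le_rpow hLx.le hle hα0))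
          (rpow_sub_rpow_le_mul_sub hα0 hα1 hLx hle) 2
    _ = α ^ 2 * log (c / x) ^ (2 * α - 2) * log (x / y) ^ 2 := by rw [← hsq]; ring

lemma rpow_log_div_sub_sq_div_sq_le {α c x y : ℝ} (hα0 : 0 ≤ α) (hα1 : α ≤ 1) (hy : 0 < y)
    (hyx : y ≤ x) (hxc : x < c) :
    (log (c / y) ^ α - log (c / x) ^ α) ^ 2 / (x - y) ^ 2
      ≤ 16 * α ^ 2 * (log (c / x) ^ (2 * α - 2) / x) * (1 / (√x * √y)) := by
  have hLx : 0 < log (c / x) := log_pos ((one_lt_div (hy.trans_le hyx)).2 hxc)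
  calc (log (c / y) ^ α - log (c / x) ^ α) ^ 2 / (x - y) ^ 2
      ≤ α ^ 2 * log (c / x) ^ (2 * α - 2) * (log (x / y) ^ 2 / (x - y) ^ 2) := by
        rw [← mul_div_assoc]
        gcongr
        exact rpow_log_div_sub_sq_le hα0 hα1 hy hyx hxc
    _ ≤ α ^ 2 * log (c / x) ^ (2 * α - 2) * (16 / (x * √x * √y)) :=
        mul_le_mul_of_nonneg_left (log_div_sq_div_sub_sq_le hy hyx)
          (mul_nonneg (sq_nonneg α) (rpow_nonneg hLx.le _))
    _ = 16 * α ^ 2 * (log (c / x) ^ (2 * α - 2) / x) * (1 / (√x * √y)) := by ring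

lemma lintegral_ofReal_deriv_le_of_monotoneOn {f f' : ℝ → ℝ} {s : Set ℝ} {m M : ℝ}
    (hs : MeasurableSet s) (hf' : ∀ x ∈ s, HasDerivWithinAt f (f' x) s x)
    (hf : MonotoneOn f s) (hfs : MapsTo f s (Icc m M)) :
    ∫⁻ x in s, ENNReal.ofReal (f' x) ≤ ENNReal.ofReal (M - m) :=
  (lintegral_deriv_eq_volume_image_of_monotoneOn hs hf' hf).trans_le
    ((measure_mono hfs.image_subset).trans volume_Icc.le)

lemma hasDerivAt_log_div {c x : ℝ} (hc : c ≠ 0) (hx : x ≠ 0) :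
    HasDerivAt (fun x ↦ log (c / x)) (-x⁻¹) x := by
  convert ((hasDerivAt_inv hx).const_mul c).log (by simp [hc, hx]) using 1
  · ext; rw [div_eq_mul_inv]
  · field_simp

lemma lintegral_Ioo_rpow_log_div_lt_top {b c p : ℝ} (hp : p < 0) (hbc : b < c) :
    ∫⁻ x in Ioo 0 b, ENNReal.ofReal (log (c / x) ^ (p - 1) / x) < ⊤ := by
  have hlog : ∀ x ∈ Ioo 0 c, 0 < log (c / x) := fun x hx ↦
    log_pos ((one_lt_div hx.1).2 hx.2)
  set Φ : ℝ → ℝ := fun x ↦ log (c / x) ^ p / -p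
  have hderiv :
      ∀ x ∈ Ioo 0 b, HasDerivWithinAt Φ (log (c / x) ^ (p - 1) / x) (Ioo 0 b) x := by
    intro x hx
    have hL := hlog x ⟨hx.1, hx.2.trans hbc⟩
    refine (((hasDerivAt_log_div (hx.1.trans (hx.2.trans hbc)).ne' hx.1.ne').rpow_const
      (Or.inl hL.ne')).div_const (-p)).hasDerivWithinAt.congr_deriv ?_
    field_simp [hp.ne]
  have hmono : MonotoneOn Φ (Ioo 0 c) := fun x hx y hy hxy ↦ by
    have hc : 0 < c := hx.1.trans hx.2
    have hL : log (c / y) ≤ log (c / x) :=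
      log_le_log (div_pos hc hy.1) (div_le_div_of_nonneg_left hc.le hx.1 hxy)
    exact div_le_div_of_nonneg_right (rpow_le_rpow_of_nonpos (hlog y hy) hL hp.le) (by linarith)
  have hmaps : MapsTo Φ (Ioo 0 b) (Icc 0 (Φ b)) := fun x hx ↦
    ⟨div_nonneg (rpow_nonneg (hlog x ⟨hx.1, hx.2.trans hbc⟩).le p) (by linarith),
      hmono ⟨hx.1, hx.2.trans hbc⟩ ⟨hx.1.trans hx.2, hbc⟩ hx.2.le⟩
  exact (lintegral_ofReal_deriv_le_of_monotoneOn measurableSet_Ioo hderiv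
    (hmono.mono (Ioo_subset_Ioo_right hbc.le)) hmaps).trans_lt ENNReal.ofReal_lt_top

lemma lintegral_Ioo_inv_sqrt_mul_sqrt_le {x : ℝ} (hx : 0 < x) :
    ∫⁻ y in Ioo 0 x, ENNReal.ofReal (1 / (√x * √y)) ≤ 2 := by
  have hsx : 0 < √x := sqrt_pos.2 hx
  have hderiv : ∀ y ∈ Ioo 0 x,
      HasDerivWithinAt (fun y ↦ 2 / √x * √y) (1 / (√x * √y)) (Ioo 0 x) y := by
    intro y hy
    refine ((hasDerivAt_sqrt hy.1.ne').const_mul (2 / √x)).hasDerivWithinAt.congr_deriv ?_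
    field_simp
  have hmono : MonotoneOn (fun y ↦ 2 / √x * √y) (Ioo 0 x) := fun y _ z _ hyz ↦ by
    dsimp only; gcongr
  have hmaps : MapsTo (fun y ↦ 2 / √x * √y) (Ioo 0 x) (Icc 0 2) := fun y hy ↦ by
    refine ⟨by positivity, ?_⟩
    calc 2 / √x * √y ≤ 2 / √x * √x := by gcongr; exact hy.2.le
      _ = 2 := by field_simp
  simpa using lintegral_ofReal_deriv_le_of_monotoneOn measurableSet_Ioo hderiv hmono hmaps

lemma lintegral_prod_le_two_mul_of_le_add_swap {X : Type*} [MeasurableSpace X] {μ : Measure X}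
    [SFinite μ] {F G : X × X → ℝ≥0∞} (hG : Measurable G)
    (hFG : ∀ᵐ p ∂μ.prod μ, F p ≤ G p + G p.swap) :
    ∫⁻ p, F p ∂μ.prod μ ≤ 2 * ∫⁻ p, G p ∂μ.prod μ :=
  calc ∫⁻ p, F p ∂μ.prod μ ≤ ∫⁻ p, G p + G p.swap ∂μ.prod μ := lintegral_mono_ae hFG
    _ = ∫⁻ p, G p ∂μ.prod μ + ∫⁻ p, G p.swap ∂μ.prod μ := lintegral_add_left hG _
    _ = 2 * ∫⁻ p, G p ∂μ.prod μ := by rw [lintegral_prod_swap, two_mul]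

lemma setLIntegral_Ioo_prod_le_of_le_inv_sqrt_mul_sqrt {b : ℝ} {F : ℝ × ℝ → ℝ≥0∞}
    {ω : ℝ → ℝ≥0∞} (hω : Measurable ω)
    (hF : ∀ x ∈ Ioo 0 b, ∀ y ∈ Ioo 0 b, y < x →
      F (x, y) ≤ ω x * ENNReal.ofReal (1 / (√x * √y)))
    (hF_symm : ∀ x y, F (x, y) = F (y, x)) (hF_diag : ∀ x, F (x, x) = 0) :
    ∫⁻ p in Ioo 0 b ×ˢ Ioo 0 b, F p ≤ 4 * ∫⁻ x in Ioo 0 b, ω x := by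
  set G : ℝ × ℝ → ℝ≥0∞ := {p | p.2 < p.1}.indicator
    fun p ↦ ω p.1 * ENNReal.ofReal (1 / (√p.1 * √p.2))
  have hG : Measurable G := ((hω.comp measurable_fst).mul (by fun_prop)).indicator
    (measurableSet_lt measurable_snd measurable_fst)
  have hFG : ∀ x ∈ Ioo 0 b, ∀ y ∈ Ioo 0 b, F (x, y) ≤ G (x, y) + G (x, y).swap := by
    intro x hx y hy
    rcases lt_trichotomy y x with hyx | rfl | hxy
    · have : F (x, y) ≤ G (x, y) := by simpa [G, hyx] using hF x hx y hy hyx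
      exact this.trans le_self_add
    · simp [hF_diag]
    · have : F (x, y) ≤ G (y, x) := by simpa [G, hxy, hF_symm x y] using hF y hy x hx hxy
      exact this.trans le_add_self
  have hinner : ∀ x ∈ Ioo 0 b, ∫⁻ y in Ioo 0 b, G (x, y) ≤ ω x * 2 := by
    intro x hx
    calc ∫⁻ y in Ioo 0 b, G (x, y)
        = ∫⁻ y in Iio x ∩ Ioo 0 b, ω x * ENNReal.ofReal (1 / (√x * √y)) := by
          rw [← Measure.restrict_restrict measurableSet_Iio,
            ← lintegral_indicator measurableSet_Iio]
          rfl
      _ ≤ ∫⁻ y in Ioo 0 x, ω x * ENNReal.ofReal (1 / (√x * √y)) :=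
          lintegral_mono_set fun y hy ↦ ⟨hy.2.1, hy.1⟩
      _ ≤ ω x * 2 := by
          rw [lintegral_const_mul _ (by fun_prop)]
          gcongr
          exact lintegral_Ioo_inv_sqrt_mul_sqrt_le hx.1
  rw [Measure.volume_eq_prod, ← Measure.prod_restrict]
  calc ∫⁻ p, F p ∂(volume.restrict (Ioo 0 b)).prod (volume.restrict (Ioo 0 b))
      ≤ 2 * ∫⁻ p, G p ∂(volume.restrict (Ioo 0 b)).prod (volume.restrict (Ioo 0 b)) := by
        refine lintegral_prod_le_two_mul_of_le_add_swap hG ?_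
        rw [Measure.prod_restrict]
        filter_upwards [ae_restrict_mem (measurableSet_Ioo.prod measurableSet_Ioo)]
          with p hp using hFG p.1 hp.1 p.2 hp.2
    _ ≤ 2 * ∫⁻ x in Ioo 0 b, ω x * 2 := by
        gcongr
        exact (lintegral_prod_le G).trans (setLIntegral_mono' measurableSet_Ioo hinner)
    _ = 4 * ∫⁻ x in Ioo 0 b, ω x := by
        rw [lintegral_mul_const _ hω, ← mul_assoc, mul_comm _ (2 : ℝ≥0∞), ← mul_assoc]
        norm_num

/-- For `α ∈ (0, 1/2)` and `f x = -(log (6/x))^α`, the Gagliardo `H^{1/2}`-seminorm of `f`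
on `(0,2)` is finite: `∫₀² ∫₀² (f x - f y)² / (x - y)² dx dy < ∞`. -/
theorem gagliardo_half_seminorm_finite
    (α : ℝ) (hα : α ∈ Set.Ioo (0 : ℝ) (1/2))
    (f : ℝ → ℝ) (hf : ∀ x, f x = -(Real.log (6 / x)) ^ α) :
    ∫⁻ q in (Set.Ioo (0 : ℝ) 2) ×ˢ (Set.Ioo (0 : ℝ) 2),
      ENNReal.ofReal ((f q.1 - f q.2) ^ 2 / (q.1 - q.2) ^ 2) < ⊤ := by
  obtain ⟨hα0, hα1⟩ := hα
  set ω : ℝ → ℝ≥0∞ := fun x ↦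
    ENNReal.ofReal (16 * α ^ 2) * ENNReal.ofReal (log (6 / x) ^ (2 * α - 2) / x)
  have hbound : ∀ x ∈ Ioo (0 : ℝ) 2, ∀ y ∈ Ioo (0 : ℝ) 2, y < x →
      ENNReal.ofReal ((f x - f y) ^ 2 / (x - y) ^ 2)
        ≤ ω x * ENNReal.ofReal (1 / (√x * √y)) := by
    intro x hx y hy hyx
    simp only [ω]
    rw [← ENNReal.ofReal_mul (by positivity), ← ENNReal.ofReal_mul' (by positivity), hf, hf,
      neg_sub_neg]
    exact ENNReal.ofReal_le_ofReal
      (rpow_log_div_sub_sq_div_sq_le hα0.le (by linarith) hy.1 hyx.le (by linarith [hx.2]))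
  calc _ ≤ 4 * ∫⁻ x in Ioo 0 2, ω x :=
        setLIntegral_Ioo_prod_le_of_le_inv_sqrt_mul_sqrt (by fun_prop) hbound
          (fun x y ↦ by rw [← neg_sub (f y), ← neg_sub y, neg_sq, neg_sq]) (fun x ↦ by simp)
    _ < ⊤ := by
        rw [lintegral_const_mul' _ _ ENNReal.ofReal_ne_top, ← mul_assoc]
        refine ENNReal.mul_lt_top (by finiteness) ?_
        have := lintegral_Ioo_rpow_log_div_lt_top (c := 6) (b := 2) (p := 2 * α - 1)
          (by linarith) (by norm_num)
        rwa [show 2 * α - 1 - 1 = 2 * α - 2 by ring] at this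
end

section
/- Let α ∈ (0, 1/2) and define f(y) = -(log(6/y))^α for y ∈ (0,2). Then there exists a constant C > 0 such that for all z ∈ (0, 1/4): ∫₀^{2-z} (f(y+z) - f(y))² dy ≤ C (log(6/z))^{2(α-1)} z. -/
open MeasureTheory Set


lemma tde_diff_le {α a b : ℝ} (hα0 : 0 < α) (hα1 : α ≤ 1) (hb : 1 ≤ b) (hba : b ≤ a) :
    a ^ α - b ^ α ≤ b ^ (α - 1) * (a - b) := by
  have hb0 : (0:ℝ) < b := lt_of_lt_of_le one_pos hb
  have ha0 : (0:ℝ) < a := hb0.trans_le hba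
  have hx : (1:ℝ) ≤ a / b := (one_le_div hb0).2 hba
  have hbern : (a / b) ^ α ≤ 1 + α * (a / b - 1) := by
    have := rpow_one_add_le_one_add_mul_self (s := a / b - 1) (by linarith) hα0.le hα1
    simpa using this
  have hab : a ^ α = b ^ α * (a / b) ^ α := by
    rw [← Real.mul_rpow hb0.le (by positivity)]
    rw [mul_div_cancel₀ _ hb0.ne']
  have h1 : a ^ α - b ^ α ≤ b ^ α * (α * (a / b - 1)) := by
    rw [hab]
    have hBα : (0:ℝ) ≤ b ^ α := Real.rpow_nonneg hb0.le _
    nlinarith [mul_le_mul_of_nonneg_left hbern hBα]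
  refine h1.trans ?_
  have h2 : b ^ α * (a / b - 1) = b ^ (α - 1) * (a - b) := by
    have : b ^ (α - 1) = b ^ α / b := by
      rw [Real.rpow_sub hb0, Real.rpow_one]
    rw [this]
    field_simp
  calc b ^ α * (α * (a / b - 1)) = α * (b ^ α * (a / b - 1)) := by ring
    _ = α * (b ^ (α - 1) * (a - b)) := by rw [h2]
    _ ≤ 1 * (b ^ (α - 1) * (a - b)) := by
        have : (0:ℝ) ≤ b ^ (α - 1) * (a - b) :=
          mul_nonneg (Real.rpow_nonneg hb0.le _) (by linarith)
        nlinarith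
    _ = b ^ (α - 1) * (a - b) := one_mul _


lemma tde_sq_rpow {x p : ℝ} (hx : 0 ≤ x) : (x ^ p) ^ 2 = x ^ (2 * p) := by
  rw [← Real.rpow_natCast (x ^ p) 2, ← Real.rpow_mul hx]
  congr 1
  push_cast
  ring

lemma tde_div_rpow {z y : ℝ} (p : ℝ) (hz : 0 ≤ z) (hy : 0 < y) :
    (z / y) ^ p = z ^ p * y ^ (-p) := by
  rw [div_eq_mul_inv, Real.mul_rpow hz (by positivity), Real.inv_rpow hy.le,
    ← Real.rpow_neg hy.le]

/-- Basic facts about the logs. -/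
lemma tde_pt {α z y : ℝ} (hα0 : 0 < α) (hα1 : α ≤ 1) (hz : 0 < z) (hy : 0 < y)
    (hyz2 : y + z ≤ 2) :
    0 ≤ Real.log (6/y) ^ α - Real.log (6/(y+z)) ^ α ∧
    Real.log (6/y) ^ α - Real.log (6/(y+z)) ^ α
      ≤ Real.log (6/(y+z)) ^ (α-1) * Real.log ((y+z)/y) ∧
    1 ≤ Real.log (6/(y+z)) := by
  have hyz0 : (0:ℝ) < y + z := by linarith
  have hB1 : 1 ≤ Real.log (6/(y+z)) := by
    rw [Real.le_log_iff_exp_le (by positivity)]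
    have h1 : Real.exp 1 < 2.7182818286 := Real.exp_one_lt_d9
    have h2 : (3:ℝ) ≤ 6/(y+z) := by
      rw [le_div_iff₀ hyz0]; linarith
    linarith
  have hBA : Real.log (6/(y+z)) ≤ Real.log (6/y) := by
    apply Real.log_le_log (by positivity)
    gcongr
    linarith
  refine ⟨?_, ?_, hB1⟩
  · have := Real.rpow_le_rpow (by linarith) hBA hα0.le
    linarith
  · have h := tde_diff_le hα0 hα1 hB1 hBA
    have hAB : Real.log (6/y) - Real.log (6/(y+z)) = Real.log ((y+z)/y) := by
      rw [Real.log_div (by norm_num) hy.ne', Real.log_div (by norm_num) hyz0.ne',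
        Real.log_div hyz0.ne' hy.ne']
      ring
    rwa [hAB] at h
lemma tde_lint1 {c z : ℝ} (hc : 0 ≤ c) (hz : 0 < z) :
    ∫⁻ y in Set.Ioc (0:ℝ) z, ENNReal.ofReal (c * y ^ (-(1:ℝ)/2))
      ≤ ENNReal.ofReal (c * (2 * z ^ ((1:ℝ)/2))) := by
  have hint : IntervalIntegrable (fun y : ℝ => c * y ^ (-(1:ℝ)/2)) volume 0 z :=
    (intervalIntegral.intervalIntegrable_rpow' (by norm_num)).const_mul c
  have hIoc : IntegrableOn (fun y : ℝ => c * y ^ (-(1:ℝ)/2)) (Set.Ioc 0 z) volume :=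
    (intervalIntegrable_iff_integrableOn_Ioc_of_le hz.le).mp hint
  have hnn : 0 ≤ᵐ[volume.restrict (Set.Ioc (0:ℝ) z)]
      fun y : ℝ => c * y ^ (-(1:ℝ)/2) := by
    filter_upwards [ae_restrict_mem measurableSet_Ioc] with y hy
    have : (0:ℝ) < y := hy.1
    positivity
  rw [← MeasureTheory.ofReal_integral_eq_lintegral_ofReal hIoc hnn]
  apply ENNReal.ofReal_le_ofReal
  rw [← intervalIntegral.integral_of_le hz.le, intervalIntegral.integral_const_mul,
    integral_rpow (Or.inl (by norm_num))]
  have h0 : (0:ℝ) ^ (-(1:ℝ)/2 + 1) = 0 := Real.zero_rpow (by norm_num)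
  have hexp : (-(1:ℝ)/2 + 1) = (1:ℝ)/2 := by norm_num
  rw [hexp] at h0 ⊢
  rw [h0]
  have : (z ^ ((1:ℝ)/2) - 0) / ((1:ℝ)/2) = 2 * z ^ ((1:ℝ)/2) := by ring
  rw [this]

lemma tde_lint2 {c a b : ℝ} (hc : 0 ≤ c) (ha : 0 < a) (hab : a ≤ b) :
    ∫⁻ y in Set.Ioc a b, ENNReal.ofReal (c * y ^ (-(3:ℝ)/2))
      ≤ ENNReal.ofReal (c * (2 * a ^ (-(1:ℝ)/2))) := by
  have h0 : (0:ℝ) ∉ Set.uIcc a b := by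
    rw [Set.uIcc_of_le hab]
    intro h
    exact absurd h.1 (by linarith)
  have hint : IntervalIntegrable (fun y : ℝ => c * y ^ (-(3:ℝ)/2)) volume a b :=
    (intervalIntegral.intervalIntegrable_rpow (Or.inr h0)).const_mul c
  have hIoc : IntegrableOn (fun y : ℝ => c * y ^ (-(3:ℝ)/2)) (Set.Ioc a b) volume :=
    (intervalIntegrable_iff_integrableOn_Ioc_of_le hab).mp hint
  have hnn : 0 ≤ᵐ[volume.restrict (Set.Ioc a b)]
      fun y : ℝ => c * y ^ (-(3:ℝ)/2) := by
    filter_upwards [ae_restrict_mem measurableSet_Ioc] with y hy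
    have : (0:ℝ) < y := ha.trans hy.1
    positivity
  rw [← MeasureTheory.ofReal_integral_eq_lintegral_ofReal hIoc hnn]
  apply ENNReal.ofReal_le_ofReal
  rw [← intervalIntegral.integral_of_le hab, intervalIntegral.integral_const_mul,
    integral_rpow (Or.inr ⟨by norm_num, h0⟩)]
  have hexp : (-(3:ℝ)/2 + 1) = -(1:ℝ)/2 := by norm_num
  rw [hexp]
  have hb0 : (0:ℝ) ≤ b ^ (-(1:ℝ)/2) := Real.rpow_nonneg (ha.trans_le hab).le _
  have : (b ^ (-(1:ℝ)/2) - a ^ (-(1:ℝ)/2)) / (-(1:ℝ)/2)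
      = 2 * (a ^ (-(1:ℝ)/2) - b ^ (-(1:ℝ)/2)) := by ring
  rw [this]
  have : 2 * (a ^ (-(1:ℝ)/2) - b ^ (-(1:ℝ)/2)) ≤ 2 * a ^ (-(1:ℝ)/2) := by linarith
  exact mul_le_mul_of_nonneg_left this hc
lemma tde_B8 {α L B : ℝ} (hα0 : 0 < α) (hα1 : α ≤ 1) (hL0 : 0 < L) (hLB : L / 8 ≤ B) :
    B ^ (α - 1) ≤ 8 * L ^ (α - 1) := by
  have h1 : B ^ (α-1) ≤ (L/8) ^ (α-1) :=
    Real.rpow_le_rpow_of_nonpos (by positivity) hLB (by linarith)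
  have h2 : (L/8 : ℝ) ^ (α-1) = L ^ (α-1) * ((8:ℝ) ^ (α-1))⁻¹ := by
    rw [Real.div_rpow hL0.le (by norm_num), div_eq_mul_inv]
  have h3 : ((8:ℝ) ^ (α-1))⁻¹ = (8:ℝ) ^ (1-α) := by
    rw [← Real.rpow_neg (by norm_num)]; ring_nf
  have h4 : (8:ℝ) ^ (1-α) ≤ 8 := by
    calc (8:ℝ) ^ (1-α) ≤ (8:ℝ) ^ (1:ℝ) :=
          Real.rpow_le_rpow_of_exponent_le (by norm_num) (by linarith)
      _ = 8 := Real.rpow_one 8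
  calc B ^ (α-1) ≤ L ^ (α-1) * (8:ℝ) ^ (1-α) := by rw [← h3, ← h2]; exact h1
    _ ≤ L ^ (α-1) * 8 := mul_le_mul_of_nonneg_left h4 (Real.rpow_nonneg hL0.le _)
    _ = 8 * L ^ (α-1) := by ring

lemma tde_z14 {α z : ℝ} (hz0 : 0 < z) (hL1 : 1 ≤ Real.log (6/z)) (hα0 : 0 < α) :
    z ^ ((1:ℝ)/4) ≤ 128 * Real.log (6/z) ^ (2*(α-1)) := by
  set L := Real.log (6/z) with hLdef
  have hL0 : (0:ℝ) < L := lt_of_lt_of_le one_pos hL1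
  have hlog : L ≤ 8 * (6/z) ^ ((1:ℝ)/8) := by
    have h1 : L ≤ (6/z) ^ ((1:ℝ)/8) / ((1:ℝ)/8) :=
      Real.log_le_rpow_div (by positivity) (by norm_num)
    have h2 : (6/z : ℝ) ^ ((1:ℝ)/8) / ((1:ℝ)/8) = 8 * (6/z) ^ ((1:ℝ)/8) := by ring
    linarith
  have hL2 : L ^ 2 ≤ 64 * (6/z) ^ ((1:ℝ)/4) := by
    have h1 : L ^ 2 ≤ (8 * (6/z) ^ ((1:ℝ)/8)) ^ 2 := pow_le_pow_left₀ hL0.le hlog 2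
    have h2 : ((8:ℝ) * (6/z) ^ ((1:ℝ)/8)) ^ 2 = 64 * ((6/z) ^ ((1:ℝ)/8)) ^ 2 := by ring
    have h3 : (((6:ℝ)/z) ^ ((1:ℝ)/8)) ^ 2 = (6/z) ^ ((1:ℝ)/4) := by
      rw [tde_sq_rpow (by positivity)]; norm_num
    rw [h2, h3] at h1; exact h1
  have h64 : ((6:ℝ)/z) ^ ((1:ℝ)/4) ≤ 2 * z ^ (-(1:ℝ)/4) := by
    have h1 : ((6:ℝ)/z) ^ ((1:ℝ)/4) = (6:ℝ) ^ ((1:ℝ)/4) * z ^ (-((1:ℝ)/4)) :=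
      tde_div_rpow _ (by norm_num) hz0
    have h2 : ((6:ℝ)) ^ ((1:ℝ)/4) ≤ 2 := by
      have h3 : ((6:ℝ)) ^ ((1:ℝ)/4) ≤ ((16:ℝ)) ^ ((1:ℝ)/4) :=
        Real.rpow_le_rpow (by norm_num) (by norm_num) (by norm_num)
      have h4 : ((16:ℝ)) ^ ((1:ℝ)/4) = 2 := by
        rw [show (16:ℝ) = (2:ℝ) ^ (4:ℕ) by norm_num,
          ← Real.rpow_natCast 2 4, ← Real.rpow_mul (by norm_num)]
        norm_num
      linarith
    have h5 : z ^ (-((1:ℝ)/4)) = z ^ (-(1:ℝ)/4) := by norm_num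
    rw [h1, h5]
    exact mul_le_mul_of_nonneg_right h2 (Real.rpow_nonneg hz0.le _)
  have hstep : z ^ ((1:ℝ)/4) * L ^ 2 ≤ 128 := by
    have h1 : L ^ 2 ≤ 128 * z ^ (-(1:ℝ)/4) := by linarith
    have h2 : z ^ ((1:ℝ)/4) * L ^ 2 ≤ z ^ ((1:ℝ)/4) * (128 * z ^ (-(1:ℝ)/4)) :=
      mul_le_mul_of_nonneg_left h1 (Real.rpow_nonneg hz0.le _)
    have h4 : z ^ ((1:ℝ)/4) * z ^ (-(1:ℝ)/4) = 1 := by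
      rw [← Real.rpow_add hz0]; norm_num
    have h3 : z ^ ((1:ℝ)/4) * (128 * z ^ (-(1:ℝ)/4)) = 128 := by
      calc z ^ ((1:ℝ)/4) * (128 * z ^ (-(1:ℝ)/4))
          = 128 * (z ^ ((1:ℝ)/4) * z ^ (-(1:ℝ)/4)) := by ring
        _ = 128 := by rw [h4]; norm_num
    linarith
  have hL2pos : (0:ℝ) < L ^ 2 := by positivity
  have h6 : z ^ ((1:ℝ)/4) ≤ 128 * (L ^ 2)⁻¹ := by
    rw [← div_eq_mul_inv, le_div_iff₀ hL2pos]; linarith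
  have h7 : (L:ℝ) ^ (-(2:ℝ)) = (L ^ 2)⁻¹ := by
    rw [Real.rpow_neg hL0.le, Real.rpow_two]
  have h8 : (L:ℝ) ^ (-(2:ℝ)) ≤ L ^ (2*(α-1)) :=
    Real.rpow_le_rpow_of_exponent_le hL1 (by nlinarith)
  calc z ^ ((1:ℝ)/4) ≤ 128 * (L ^ 2)⁻¹ := h6
    _ = 128 * L ^ (-(2:ℝ)) := by rw [h7]
    _ ≤ 128 * L ^ (2*(α-1)) := mul_le_mul_of_nonneg_left h8 (by norm_num)

lemma tde_point1 {α z y L : ℝ} (hα0 : 0 < α) (hα1 : α ≤ 1) (hz0 : 0 < z) (hy0 : 0 < y)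
    (hyz : y ≤ z) (hyz2 : y + z ≤ 2) (hL0 : 0 < L)
    (hLB : L / 8 ≤ Real.log (6/(y+z))) :
    (Real.log (6/y) ^ α - Real.log (6/(y+z)) ^ α) ^ 2
      ≤ (2048 * L ^ (2*(α-1)) * z ^ ((1:ℝ)/2)) * y ^ (-(1:ℝ)/2) := by
  obtain ⟨hnn, hdiff, hB1⟩ := tde_pt hα0 hα1 hz0 hy0 hyz2
  have hBb : Real.log (6/(y+z)) ^ (α-1) ≤ 8 * L ^ (α-1) := tde_B8 hα0 hα1 hL0 hLB
  have hABnn : (0:ℝ) ≤ Real.log ((y+z)/y) :=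
    Real.log_nonneg ((le_div_iff₀ hy0).2 (by linarith))
  have hABb : Real.log ((y+z)/y) ≤ 4 * (2*z/y) ^ ((1:ℝ)/4) := by
    have h1 : Real.log ((y+z)/y) ≤ Real.log (2*z/y) := by
      apply Real.log_le_log (by positivity)
      apply div_le_div_of_nonneg_right (by linarith) hy0.le
    have h2 : Real.log (2*z/y) ≤ (2*z/y) ^ ((1:ℝ)/4) / ((1:ℝ)/4) :=
      Real.log_le_rpow_div (by positivity) (by norm_num)
    have h3 : (2*z/y) ^ ((1:ℝ)/4) / ((1:ℝ)/4) = 4 * (2*z/y) ^ ((1:ℝ)/4) := by ring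
    linarith
  have hD : Real.log (6/y) ^ α - Real.log (6/(y+z)) ^ α
      ≤ (8 * L ^ (α-1)) * (4 * (2*z/y) ^ ((1:ℝ)/4)) := by
    refine hdiff.trans ?_
    apply mul_le_mul hBb hABb hABnn (by positivity)
  have hsq : (Real.log (6/y) ^ α - Real.log (6/(y+z)) ^ α) ^ 2
      ≤ ((8 * L ^ (α-1)) * (4 * (2*z/y) ^ ((1:ℝ)/4))) ^ 2 :=
    pow_le_pow_left₀ hnn hD 2
  refine hsq.trans ?_
  have e1 : ((8 * L ^ (α-1)) * (4 * (2*z/y) ^ ((1:ℝ)/4))) ^ 2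
      = 1024 * (L ^ (α-1)) ^ 2 * ((2*z/y) ^ ((1:ℝ)/4)) ^ 2 := by ring
  have e2 : (L ^ (α-1)) ^ 2 = L ^ (2*(α-1)) := tde_sq_rpow hL0.le
  have e3 : ((2*z/y) ^ ((1:ℝ)/4)) ^ 2 = (2*z/y) ^ ((1:ℝ)/2) := by
    rw [tde_sq_rpow (by positivity)]; norm_num
  have e4 : (2*z/y) ^ ((1:ℝ)/2) ≤ 2 * (z ^ ((1:ℝ)/2) * y ^ (-(1:ℝ)/2)) := by
    have h5 : (2*z/y) ^ ((1:ℝ)/2) = (2*z) ^ ((1:ℝ)/2) * y ^ (-((1:ℝ)/2)) :=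
      tde_div_rpow _ (by positivity) hy0
    have h6 : ((2:ℝ)*z) ^ ((1:ℝ)/2) = (2:ℝ) ^ ((1:ℝ)/2) * z ^ ((1:ℝ)/2) :=
      Real.mul_rpow (by norm_num) hz0.le
    have h7 : (2:ℝ) ^ ((1:ℝ)/2) ≤ 2 := by
      calc (2:ℝ) ^ ((1:ℝ)/2) ≤ (2:ℝ) ^ (1:ℝ) :=
            Real.rpow_le_rpow_of_exponent_le (by norm_num) (by norm_num)
        _ = 2 := Real.rpow_one 2
    have h8 : y ^ (-((1:ℝ)/2)) = y ^ (-(1:ℝ)/2) := by norm_num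
    have hy12 : (0:ℝ) ≤ z ^ ((1:ℝ)/2) * y ^ (-(1:ℝ)/2) := by positivity
    have h9 := mul_le_mul_of_nonneg_right h7 hy12
    calc (2*z/y) ^ ((1:ℝ)/2)
        = (2:ℝ) ^ ((1:ℝ)/2) * (z ^ ((1:ℝ)/2) * y ^ (-(1:ℝ)/2)) := by
          rw [h5, h6, h8]; ring
      _ ≤ 2 * (z ^ ((1:ℝ)/2) * y ^ (-(1:ℝ)/2)) := h9
  calc ((8 * L ^ (α-1)) * (4 * (2*z/y) ^ ((1:ℝ)/4))) ^ 2
      = 1024 * L ^ (2*(α-1)) * (2*z/y) ^ ((1:ℝ)/2) := by rw [e1, e2, e3]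
    _ ≤ 1024 * L ^ (2*(α-1)) * (2 * (z ^ ((1:ℝ)/2) * y ^ (-(1:ℝ)/2))) :=
        mul_le_mul_of_nonneg_left e4 (by positivity)
    _ = (2048 * L ^ (2*(α-1)) * z ^ ((1:ℝ)/2)) * y ^ (-(1:ℝ)/2) := by ring

lemma tde_point2 {α z y L : ℝ} (hα0 : 0 < α) (hα1 : α ≤ 1) (hz0 : 0 < z) (hzy : z < y)
    (hyz2 : y + z ≤ 2) (hL1 : 1 ≤ L)
    (hz14 : z ^ ((1:ℝ)/4) ≤ 128 * L ^ (2*(α-1)))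
    (hcase : L / 8 ≤ Real.log (6/(y+z)) ∨ z / y ≤ z ^ ((1:ℝ)/2)) :
    (Real.log (6/y) ^ α - Real.log (6/(y+z)) ^ α) ^ 2
      ≤ (128 * L ^ (2*(α-1)) * z ^ ((3:ℝ)/2)) * y ^ (-(3:ℝ)/2) := by
  have hL0 : (0:ℝ) < L := lt_of_lt_of_le one_pos hL1
  have hy0 : (0:ℝ) < y := hz0.trans hzy
  obtain ⟨hnn, hdiff, hB1⟩ := tde_pt hα0 hα1 hz0 hy0 hyz2
  have hABnn : (0:ℝ) ≤ Real.log ((y+z)/y) :=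
    Real.log_nonneg ((le_div_iff₀ hy0).2 (by linarith))
  have hABb : Real.log ((y+z)/y) ≤ z / y := by
    have h1 : (y+z)/y = 1 + z/y := by field_simp
    have h2 : Real.log (1 + z/y) ≤ (1 + z/y) - 1 :=
      Real.log_le_sub_one_of_pos (by positivity)
    rw [h1]; linarith
  have hzy1 : z / y ≤ 1 := by rw [div_le_one hy0]; linarith
  have hzynn : (0:ℝ) < z / y := by positivity
  have h32 : ((z:ℝ)/y) ^ ((3:ℝ)/2) = z ^ ((3:ℝ)/2) * y ^ (-(3:ℝ)/2) := by
    rw [tde_div_rpow _ hz0.le hy0]; norm_num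
  have h32nn : (0:ℝ) ≤ ((z:ℝ)/y) ^ ((3:ℝ)/2) := Real.rpow_nonneg hzynn.le _
  rcases hcase with hLB | hzy2
  · -- close to the origin: use B ≥ L/8
    have hBb : Real.log (6/(y+z)) ^ (α-1) ≤ 8 * L ^ (α-1) := tde_B8 hα0 hα1 hL0 hLB
    have hD : Real.log (6/y) ^ α - Real.log (6/(y+z)) ^ α
        ≤ (8 * L ^ (α-1)) * (z/y) := by
      refine hdiff.trans ?_
      apply mul_le_mul hBb hABb hABnn (by positivity)
    have hsq : (Real.log (6/y) ^ α - Real.log (6/(y+z)) ^ α) ^ 2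
        ≤ ((8 * L ^ (α-1)) * (z/y)) ^ 2 := pow_le_pow_left₀ hnn hD 2
    refine hsq.trans ?_
    have e1 : ((8 * L ^ (α-1)) * (z/y)) ^ 2
        = 64 * (L ^ (α-1)) ^ 2 * (z/y) ^ (2:ℕ) := by ring
    have e2 : (L ^ (α-1)) ^ 2 = L ^ (2*(α-1)) := tde_sq_rpow hL0.le
    have e3 : ((z:ℝ)/y) ^ (2:ℕ) = (z/y) ^ ((2:ℝ)) := (Real.rpow_two _).symm
    have e4 : ((z:ℝ)/y) ^ ((2:ℝ)) ≤ (z/y) ^ ((3:ℝ)/2) :=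
      Real.rpow_le_rpow_of_exponent_ge hzynn hzy1 (by norm_num)
    have hqnn : (0:ℝ) ≤ L ^ (2*(α-1)) := Real.rpow_nonneg hL0.le _
    calc ((8 * L ^ (α-1)) * (z/y)) ^ 2
        = 64 * L ^ (2*(α-1)) * (z/y) ^ ((2:ℝ)) := by rw [e1, e2, e3]
      _ ≤ 64 * L ^ (2*(α-1)) * (z/y) ^ ((3:ℝ)/2) :=
          mul_le_mul_of_nonneg_left e4 (by positivity)
      _ ≤ 128 * L ^ (2*(α-1)) * (z/y) ^ ((3:ℝ)/2) := by
          have hA : (0:ℝ) ≤ L ^ (2*(α-1)) * (z/y) ^ ((3:ℝ)/2) := mul_nonneg hqnn h32nn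
          calc 64 * L ^ (2*(α-1)) * (z/y) ^ ((3:ℝ)/2)
              = 64 * (L ^ (2*(α-1)) * (z/y) ^ ((3:ℝ)/2)) := by ring
            _ ≤ 128 * (L ^ (2*(α-1)) * (z/y) ^ ((3:ℝ)/2)) := by linarith
            _ = 128 * L ^ (2*(α-1)) * (z/y) ^ ((3:ℝ)/2) := by ring
      _ = (128 * L ^ (2*(α-1)) * z ^ ((3:ℝ)/2)) * y ^ (-(3:ℝ)/2) := by
          rw [h32]; ring
  · -- far from the origin: use B ≥ 1 and z/y ≤ √z
    have hBb : Real.log (6/(y+z)) ^ (α-1) ≤ 1 :=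
      Real.rpow_le_one_of_one_le_of_nonpos hB1 (by linarith)
    have hD : Real.log (6/y) ^ α - Real.log (6/(y+z)) ^ α ≤ z/y := by
      refine hdiff.trans ?_
      calc Real.log (6/(y+z)) ^ (α-1) * Real.log ((y+z)/y)
          ≤ 1 * (z/y) := mul_le_mul hBb hABb hABnn (by norm_num)
        _ = z/y := one_mul _
    have hsq : (Real.log (6/y) ^ α - Real.log (6/(y+z)) ^ α) ^ 2
        ≤ (z/y) ^ 2 := pow_le_pow_left₀ hnn hD 2
    refine hsq.trans ?_
    have e3 : ((z:ℝ)/y) ^ (2:ℕ) = (z/y) ^ ((2:ℝ)) := (Real.rpow_two _).symm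
    have e5 : ((z:ℝ)/y) ^ ((2:ℝ)) = (z/y) ^ ((1:ℝ)/2) * (z/y) ^ ((3:ℝ)/2) := by
      rw [← Real.rpow_add hzynn]; norm_num
    have h12 : ((z:ℝ)/y) ^ ((1:ℝ)/2) ≤ z ^ ((1:ℝ)/4) := by
      calc ((z:ℝ)/y) ^ ((1:ℝ)/2) ≤ (z ^ ((1:ℝ)/2)) ^ ((1:ℝ)/2) :=
            Real.rpow_le_rpow hzynn.le hzy2 (by norm_num)
        _ = z ^ ((1:ℝ)/4) := by rw [← Real.rpow_mul hz0.le]; norm_num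
    calc ((z:ℝ)/y) ^ 2 = (z/y) ^ ((1:ℝ)/2) * (z/y) ^ ((3:ℝ)/2) := by rw [← e5, ← e3]
      _ ≤ z ^ ((1:ℝ)/4) * (z/y) ^ ((3:ℝ)/2) :=
          mul_le_mul_of_nonneg_right h12 h32nn
      _ ≤ (128 * L ^ (2*(α-1))) * (z/y) ^ ((3:ℝ)/2) :=
          mul_le_mul_of_nonneg_right hz14 h32nn
      _ = (128 * L ^ (2*(α-1)) * z ^ ((3:ℝ)/2)) * y ^ (-(3:ℝ)/2) := by
          rw [h32]; ring
/-- For `α ∈ (0, 1/2)` and `f y = -(log (6/y))^α`, there is `C > 0` such that for all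
`z ∈ (0, 1/4)`: `∫₀^{2-z} (f (y+z) - f y)² dy ≤ C (log (6/z))^{2(α-1)} z`. -/
theorem translation_difference_estimate
    (α : ℝ) (hα : α ∈ Set.Ioo (0 : ℝ) (1/2))
    (f : ℝ → ℝ) (hf : ∀ y, f y = -(Real.log (6 / y)) ^ α) :
    ∃ C > (0 : ℝ), ∀ z ∈ Set.Ioo (0 : ℝ) (1/4),
      ∫⁻ y in Set.Ioo (0 : ℝ) (2 - z), ENNReal.ofReal ((f (y + z) - f y) ^ 2)
        ≤ ENNReal.ofReal (C * Real.log (6 / z) ^ (2 * (α - 1)) * z) := by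
  obtain ⟨hα0, hαh⟩ := hα
  have hα1 : α ≤ 1 := by linarith
  refine ⟨5000, by norm_num, ?_⟩
  rintro z ⟨hz0, hz4⟩
  set L := Real.log (6 / z) with hLdef
  have hL1 : 1 ≤ L := by
    rw [hLdef, Real.le_log_iff_exp_le (by positivity)]
    have h1 : Real.exp 1 < 2.7182818286 := Real.exp_one_lt_d9
    have h2 : (24:ℝ) ≤ 6 / z := by rw [le_div_iff₀ hz0]; linarith
    linarith
  have hL0 : (0:ℝ) < L := lt_of_lt_of_le one_pos hL1
  have hQ : (0:ℝ) ≤ L ^ (2 * (α - 1)) := Real.rpow_nonneg hL0.le _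
  set s := Real.sqrt (6 * z) with hsdef
  have hs0 : (0:ℝ) < s := Real.sqrt_pos.2 (by linarith)
  have hzs : z ≤ s := by
    rw [hsdef, Real.le_sqrt hz0.le (by positivity)]
    nlinarith
  -- log arithmetic facts
  have hl2 : (0:ℝ) ≤ Real.log 2 := Real.log_nonneg (by norm_num)
  have hl23 : Real.log 2 ≤ Real.log 3 := Real.log_le_log (by norm_num) (by norm_num)
  have hlz : Real.log z ≤ -(2 * Real.log 2) := by
    have h1 : Real.log z ≤ Real.log (1/4) := Real.log_le_log hz0 (by linarith)
    have h4 : Real.log (1/4 : ℝ) = -(2 * Real.log 2) := by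
      rw [show (1:ℝ)/4 = ((2:ℝ)^(2:ℕ))⁻¹ by norm_num, Real.log_inv, Real.log_pow]
      push_cast; ring
    linarith
  have hlog6 : Real.log 6 = Real.log 2 + Real.log 3 := by
    rw [show (6:ℝ) = 2 * 3 by norm_num, Real.log_mul (by norm_num) (by norm_num)]
  have hLz : L = Real.log 6 - Real.log z := Real.log_div (by norm_num) hz0.ne'
  -- lower bound for log (6/(y+z)) when y ≤ s
  have hbL : ∀ y : ℝ, 0 < y → y ≤ s → L / 8 ≤ Real.log (6 / (y + z)) := by
    intro y hy hys
    have hyz0 : (0:ℝ) < y + z := by linarith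
    have h1 : Real.log (6 / (2 * s)) ≤ Real.log (6 / (y + z)) := by
      apply Real.log_le_log (by positivity)
      exact div_le_div_of_nonneg_left (by norm_num) hyz0 (by linarith)
    have hlogs : Real.log s = (Real.log 6 + Real.log z) / 2 := by
      rw [hsdef, Real.log_sqrt (by positivity), Real.log_mul (by norm_num) hz0.ne']
    have h2 : Real.log (6 / (2 * s)) = Real.log 6 - (Real.log 2 + Real.log s) := by
      rw [Real.log_div (by norm_num) (by positivity), Real.log_mul (by norm_num) hs0.ne']
    linarith
  have hz14 : z ^ ((1:ℝ)/4) ≤ 128 * L ^ (2*(α-1)) := tde_z14 hz0 hL1 hα0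
  have hfry : ∀ y : ℝ, f (y + z) - f y
      = Real.log (6/y) ^ α - Real.log (6/(y+z)) ^ α := by
    intro y; rw [hf, hf]; ring
  -- pointwise bound on region I : `Ioc 0 z`
  have hpt1 : ∀ y ∈ Set.Ioc (0:ℝ) z,
      ENNReal.ofReal ((f (y + z) - f y) ^ 2)
        ≤ ENNReal.ofReal ((2048 * L ^ (2*(α-1)) * z ^ ((1:ℝ)/2)) * y ^ (-(1:ℝ)/2)) := by
    rintro y ⟨hy0, hyz⟩
    apply ENNReal.ofReal_le_ofReal
    rw [hfry]
    exact tde_point1 hα0 hα1 hz0 hy0 hyz (by linarith) hL0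
      (hbL y hy0 (hyz.trans hzs))
  -- pointwise bound on region II : `Ioc z (2-z)`
  have hpt2 : ∀ y ∈ Set.Ioc z (2 - z),
      ENNReal.ofReal ((f (y + z) - f y) ^ 2)
        ≤ ENNReal.ofReal ((128 * L ^ (2*(α-1)) * z ^ ((3:ℝ)/2)) * y ^ (-(3:ℝ)/2)) := by
    rintro y ⟨hzy, hy2⟩
    apply ENNReal.ofReal_le_ofReal
    rw [hfry]
    have hy0 : (0:ℝ) < y := hz0.trans hzy
    refine tde_point2 hα0 hα1 hz0 hzy (by linarith) hL1 hz14 ?_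
    rcases le_or_gt y s with hys | hys
    · exact Or.inl (hbL y hy0 hys)
    · refine Or.inr ?_
      have h1 : z / y ≤ z / s := div_le_div_of_nonneg_left hz0.le hs0 hys.le
      have h2 : z / s ≤ z / Real.sqrt z := by
        apply div_le_div_of_nonneg_left hz0.le (Real.sqrt_pos.2 hz0)
        rw [hsdef]; exact Real.sqrt_le_sqrt (by linarith)
      have h3 : z / Real.sqrt z = Real.sqrt z := Real.div_sqrt
      have h4 : Real.sqrt z = z ^ ((1:ℝ)/2) := Real.sqrt_eq_rpow z
      linarith
  -- assemble
  have hz2 : z ≤ 2 - z := by linarith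
  have hsub : Set.Ioo (0:ℝ) (2 - z) ⊆ Set.Ioc (0:ℝ) z ∪ Set.Ioc z (2 - z) := by
    rintro x ⟨hx0, hx2⟩
    rcases le_or_gt x z with h | h
    · exact Or.inl ⟨hx0, h⟩
    · exact Or.inr ⟨h, hx2.le⟩
  have hc1 : (0:ℝ) ≤ 2048 * L ^ (2*(α-1)) * z ^ ((1:ℝ)/2) := by positivity
  have hc2 : (0:ℝ) ≤ 128 * L ^ (2*(α-1)) * z ^ ((3:ℝ)/2) := by positivity
  calc ∫⁻ y in Set.Ioo (0:ℝ) (2 - z), ENNReal.ofReal ((f (y + z) - f y) ^ 2)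
      ≤ ∫⁻ y in Set.Ioc (0:ℝ) z ∪ Set.Ioc z (2 - z),
          ENNReal.ofReal ((f (y + z) - f y) ^ 2) := lintegral_mono_set hsub
    _ ≤ (∫⁻ y in Set.Ioc (0:ℝ) z, ENNReal.ofReal ((f (y + z) - f y) ^ 2))
        + ∫⁻ y in Set.Ioc z (2 - z), ENNReal.ofReal ((f (y + z) - f y) ^ 2) :=
          lintegral_union_le _ _ _
    _ ≤ ENNReal.ofReal ((2048 * L ^ (2*(α-1)) * z ^ ((1:ℝ)/2)) * (2 * z ^ ((1:ℝ)/2)))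
        + ENNReal.ofReal ((128 * L ^ (2*(α-1)) * z ^ ((3:ℝ)/2)) * (2 * z ^ (-(1:ℝ)/2))) := by
          apply add_le_add
          · exact (setLIntegral_mono' measurableSet_Ioc hpt1).trans (tde_lint1 hc1 hz0)
          · exact (setLIntegral_mono' measurableSet_Ioc hpt2).trans (tde_lint2 hc2 hz0 hz2)
    _ ≤ ENNReal.ofReal (5000 * L ^ (2 * (α - 1)) * z) := by
          rw [← ENNReal.ofReal_add (by positivity) (by positivity)]
          apply ENNReal.ofReal_le_ofReal
          have e1 : z ^ ((1:ℝ)/2) * z ^ ((1:ℝ)/2) = z := by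
            rw [← Real.rpow_add hz0]; norm_num
          have e2 : z ^ ((3:ℝ)/2) * z ^ (-(1:ℝ)/2) = z := by
            rw [← Real.rpow_add hz0]; norm_num
          have etot : (2048 * L ^ (2*(α-1)) * z ^ ((1:ℝ)/2)) * (2 * z ^ ((1:ℝ)/2))
              + (128 * L ^ (2*(α-1)) * z ^ ((3:ℝ)/2)) * (2 * z ^ (-(1:ℝ)/2))
              = 4352 * L ^ (2*(α-1)) * z := by
            linear_combination (4096 * L ^ (2*(α-1))) * e1 + (256 * L ^ (2*(α-1))) * e2
          rw [etot]
          have hQz : (0:ℝ) ≤ L ^ (2*(α-1)) * z := mul_nonneg hQ hz0.le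
          calc (4352:ℝ) * L ^ (2*(α-1)) * z = 4352 * (L ^ (2*(α-1)) * z) := by ring
            _ ≤ 5000 * (L ^ (2*(α-1)) * z) := by linarith
            _ = 5000 * L ^ (2*(α-1)) * z := by ring
end

section
/- Let p ≥ 2 be a natural number, k > 0, w₀ > 0, T > 0, and let w : [0, T) → ℝ be differentiable with w(0) = w₀ and w'(t) ≥ k·w(t)^p for all t ∈ [0, T). Then for every t ∈ [0, T) with k·(p-1)·t·w₀^{p-1} < 1 one has w(t) ≥ w₀ · (1 - k·(p-1)·t·w₀^{p-1})^{-1/(p-1)}. Consequently, T ≤ 1/(k·(p-1)·w₀^{p-1}). -/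
/-!
Once `w` is known to stay positive, `u = w ^ (1 - p)` satisfies
`u' = (1 - p) w ^ (-p) w' ≤ -(p - 1) k`, so `u t ≤ w₀ ^ (1 - p) - (p - 1) k t`. Raising this to
the power `-1 / (p - 1)` gives the lower bound for `w`, and since `u > 0` the right-hand side
must stay positive on `[0, T)`, which bounds `T`. Positivity of `w` holds because `w' > 0`
wherever `w` equals `w₀ / 2`, so `w` can never fall to that level.
-/

open Set

section

variable {f f' : ℝ → ℝ} {a b : ℝ}

theorem le_of_deriv_pos_at_level {c : ℝ}
    (hf : ∀ x ∈ Ico a b, HasDerivWithinAt f (f' x) (Ico a b) x) (ha : c ≤ f a)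
    (hc : ∀ x ∈ Ico a b, f x = c → 0 < f' x) : ∀ t ∈ Ico a b, c ≤ f t := by
  intro t ht
  have hsub : Icc a t ⊆ Ico a b := Icc_subset_Ico_right ht.2
  have hfence := image_le_of_deriv_right_lt_deriv_boundary' (f := fun x => -f x)
    (f' := fun x => -f' x) (B := fun _ => -c) (B' := fun _ => 0)
    (fun x hx => ((hf x (hsub hx)).continuousWithinAt.mono hsub).neg)
    (fun x hx => ((hf x (hsub (Ico_subset_Icc_self hx))).mono_of_mem_nhdsWithin
      (Ico_mem_nhdsGE_of_mem ⟨hx.1, hx.2.trans_le ht.2.le⟩)).neg)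
    (neg_le_neg ha) continuousOn_const (fun _ _ => hasDerivWithinAt_const _ _ _)
    (fun x hx hx_eq => neg_lt_zero.2 <| hc x (hsub (Ico_subset_Icc_self hx)) (neg_inj.1 hx_eq))
    (right_mem_Icc.2 ht.1)
  exact neg_le_neg_iff.1 hfence

theorem antitoneOn_Ico_of_hasDerivWithinAt_nonpos
    (hf : ∀ x ∈ Ico a b, HasDerivWithinAt f (f' x) (Ico a b) x) (hf' : ∀ x ∈ Ico a b, f' x ≤ 0) :
    AntitoneOn f (Ico a b) := by
  have hint : interior (Ico a b) ⊆ Ico a b := interior_subset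
  exact antitoneOn_of_hasDerivWithinAt_nonpos (convex_Ico a b)
    (fun x hx => (hf x hx).continuousWithinAt) (fun x hx => (hf x (hint hx)).mono hint)
    (fun x hx => hf' x (hint hx))

end

section

variable {p : ℕ} {k a b : ℝ} {w w' : ℝ → ℝ}

theorem pos_of_pow_le_deriv (hk : 0 < k) (ha : 0 < w a)
    (hderiv : ∀ t ∈ Ico a b, HasDerivWithinAt w (w' t) (Ico a b) t)
    (hineq : ∀ t ∈ Ico a b, k * w t ^ p ≤ w' t) : ∀ t ∈ Ico a b, 0 < w t := by
  intro t ht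
  have hhalf : w a / 2 ≤ w t :=
    le_of_deriv_pos_at_level hderiv (half_le_self ha.le)
      (fun x hx hx_eq => (hineq x hx).trans_lt' (by rw [hx_eq]; positivity)) t ht
  linarith

theorem rpow_one_sub_le_of_pow_le_deriv (hp : 1 ≤ p)
    (hpos : ∀ t ∈ Ico a b, 0 < w t)
    (hderiv : ∀ t ∈ Ico a b, HasDerivWithinAt w (w' t) (Ico a b) t)
    (hineq : ∀ t ∈ Ico a b, k * w t ^ p ≤ w' t) :
    ∀ t ∈ Ico a b, w t ^ (1 - (p : ℝ)) ≤ w a ^ (1 - (p : ℝ)) - ((p : ℝ) - 1) * k * (t - a) := by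
  intro t ht
  have hrate : ∀ x ∈ Ico a b, k ≤ w x ^ (-(p : ℝ)) * w' x := fun x hx => by
    have hwx : 0 < w x ^ (-(p : ℝ)) := Real.rpow_pos_of_pos (hpos x hx) _
    calc k = w x ^ (-(p : ℝ)) * (k * w x ^ p) := by
          rw [Real.rpow_neg (hpos x hx).le, Real.rpow_natCast]
          field_simp [(pow_pos (hpos x hx) p).ne']
      _ ≤ w x ^ (-(p : ℝ)) * w' x := mul_le_mul_of_nonneg_left (hineq x hx) hwx.le
  have hanti :
      AntitoneOn (fun x => w x ^ (1 - (p : ℝ)) + ((p : ℝ) - 1) * k * (x - a)) (Ico a b) := by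
    refine antitoneOn_Ico_of_hasDerivWithinAt_nonpos
      (f' := fun x => w' x * (1 - (p : ℝ)) * w x ^ (1 - (p : ℝ) - 1) + ((p : ℝ) - 1) * k * 1)
      (fun x hx => ?_) (fun x hx => ?_)
    · exact ((hderiv x hx).rpow_const (Or.inl (hpos x hx).ne')).add
        (((hasDerivWithinAt_id x _).sub_const a).const_mul (((p : ℝ) - 1) * k))
    · have hp' : (0 : ℝ) ≤ p - 1 := sub_nonneg.2 (by exact_mod_cast hp)
      calc _ = ((p : ℝ) - 1) * (k - w x ^ (-(p : ℝ)) * w' x) := by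
            rw [show 1 - (p : ℝ) - 1 = -(p : ℝ) by ring]
            ring
        _ ≤ 0 := mul_nonpos_of_nonneg_of_nonpos hp' (sub_nonpos.2 (hrate x hx))
  have hat := hanti ⟨le_rfl, ht.1.trans_lt ht.2⟩ ht ht.1
  simp only [sub_self, mul_zero, add_zero] at hat
  linarith

end

theorem mul_rpow_neg_inv_le_of_rpow_neg_le {x y g q : ℝ} (hx : 0 < x) (hy : 0 < y) (hg : 0 < g)
    (hq : 0 < q) (h : y ^ (-q) ≤ x ^ (-q) * g) : x * g ^ (-(1 / q)) ≤ y := by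
  have hinv : -q * -(1 / q) = 1 := by field_simp
  calc x * g ^ (-(1 / q)) = (x ^ (-q) * g) ^ (-(1 / q)) := by
        rw [Real.mul_rpow (by positivity) hg.le, ← Real.rpow_mul hx.le, hinv, Real.rpow_one]
    _ ≤ (y ^ (-q)) ^ (-(1 / q)) :=
        Real.rpow_le_rpow_of_nonpos (by positivity) h (by simpa using hq.le)
    _ = y := by rw [← Real.rpow_mul hy.le, hinv, Real.rpow_one]

theorem ode_comparison_blowup_general
    (p : ℕ) (hp : 2 ≤ p) (k w₀ T : ℝ) (hk : 0 < k) (hw₀ : 0 < w₀)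
    (w w' : ℝ → ℝ) (hw0 : w 0 = w₀)
    (hderiv : ∀ t ∈ Set.Ico (0 : ℝ) T, HasDerivWithinAt w (w' t) (Set.Ico (0 : ℝ) T) t)
    (hineq : ∀ t ∈ Set.Ico (0 : ℝ) T, k * w t ^ p ≤ w' t) :
    (∀ t ∈ Set.Ico (0 : ℝ) T, k * ((p : ℝ) - 1) * t * w₀ ^ (p - 1) < 1 →
      w₀ * (1 - k * ((p : ℝ) - 1) * t * w₀ ^ (p - 1)) ^ (-(1 / ((p : ℝ) - 1))) ≤ w t) ∧
    T ≤ 1 / (k * ((p : ℝ) - 1) * w₀ ^ (p - 1)) := by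
  set q : ℝ := (p : ℝ) - 1
  have hq : 0 < q := by
    rw [sub_pos]
    exact_mod_cast hp
  have hpow : w₀ ^ (p - 1) = w₀ ^ q := by
    rw [← Real.rpow_natCast, Nat.cast_sub (by omega), Nat.cast_one]
  have hpos := pos_of_pow_le_deriv hk (hw0 ▸ hw₀) hderiv hineq
  have hbound : ∀ t ∈ Ico 0 T, w t ^ (-q) ≤ w₀ ^ (-q) * (1 - k * q * t * w₀ ^ (p - 1)) := by
    intro t ht
    have hcancel : w₀ ^ (-q) * w₀ ^ q = 1 := by
      rw [← Real.rpow_add hw₀, neg_add_cancel, Real.rpow_zero]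
    calc w t ^ (-q) ≤ w₀ ^ (-q) - q * k * t := by
          simpa [hw0, q] using rpow_one_sub_le_of_pow_le_deriv (by omega) hpos hderiv hineq t ht
      _ = _ := by
        rw [hpow, mul_sub, mul_one, mul_left_comm, hcancel]
        ring
  refine ⟨fun t ht ht1 => mul_rpow_neg_inv_le_of_rpow_neg_le hw₀ (hpos t ht) (by linarith) hq
    (hbound t ht), ?_⟩
  by_contra! hT
  have hc : 0 < k * q * w₀ ^ (p - 1) := by positivity
  have hT₀ : 1 / (k * q * w₀ ^ (p - 1)) ∈ Ico 0 T := ⟨by positivity, hT⟩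
  have hblow := hbound _ hT₀
  rw [show k * q * (1 / (k * q * w₀ ^ (p - 1))) * w₀ ^ (p - 1) = 1 by field_simp, sub_self,
    mul_zero] at hblow
  exact (not_lt.2 hblow) (Real.rpow_pos_of_pos (hpos _ hT₀) _)

/-- ODE comparison/blow-up lemma: if `w` is differentiable on `[0,T)` with `w 0 = w₀ > 0` and
`w' t ≥ k w t ^ p` on `[0,T)`, then `w t ≥ w₀ (1 - k(p-1) t w₀^{p-1})^{-1/(p-1)}` whenever
`k(p-1) t w₀^{p-1} < 1`, and consequently `T ≤ 1/(k(p-1) w₀^{p-1})`. -/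
theorem ode_comparison_blowup
    (p : ℕ) (hp : 2 ≤ p) (k w₀ T : ℝ) (hk : 0 < k) (hw₀ : 0 < w₀) (hT : 0 < T)
    (w w' : ℝ → ℝ) (hw0 : w 0 = w₀)
    (hderiv : ∀ t ∈ Set.Ico (0 : ℝ) T, HasDerivWithinAt w (w' t) (Set.Ico (0 : ℝ) T) t)
    (hineq : ∀ t ∈ Set.Ico (0 : ℝ) T, k * w t ^ p ≤ w' t) :
    (∀ t ∈ Set.Ico (0 : ℝ) T, k * ((p : ℝ) - 1) * t * w₀ ^ (p - 1) < 1 →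
      w₀ * (1 - k * ((p : ℝ) - 1) * t * w₀ ^ (p - 1)) ^ (-(1 / ((p : ℝ) - 1))) ≤ w t) ∧
    T ≤ 1 / (k * ((p : ℝ) - 1) * w₀ ^ (p - 1)) :=
  ode_comparison_blowup_general p hp k w₀ T hk hw₀ w w' hw0 hderiv hineq
end

section
/- Let p ≥ 2 be a natural number and k > 0. Let Λ̃ = {(t,x) ∈ ℝ² : 0 ≤ t < 1 and t < x < 2 - t}, and let w : Λ̃ → ℝ be continuously differentiable with (∂_t w + ∂_x w)(t,x) ≥ k·w(t,x)^p for all (t,x) ∈ Λ̃, and w(0,x) = w₀(x) > 0 for all x ∈ (0,2). Then for every x ∈ (0,2) and every t ≥ 0 with (t, x+t) ∈ Λ̃ and k·(p-1)·t·w₀(x)^{p-1} < 1, one has w(t, x+t) ≥ w₀(x) · (1 - k·(p-1)·t·w₀(x)^{p-1})^{-1/(p-1)}. -/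
/-!
Along the characteristic `t ↦ (t, x + t)` the function `g t = w (t, x + t)` satisfies the
ODE inequality `g' ≥ k g ^ p`, and `f t = W (1 - k (p-1) t W^(p-1))^(-1/(p-1))` solves
`f' = k f ^ p`, `f 0 = W`. For `k' < k` the blow-up solution `f_{k'}` can never touch `g`
from below, since at a contact point `f_{k'}' = k' f ^ p < k g ^ p ≤ g'`; letting `k' ↑ k` gives
`f_k ≤ g`.
-/

open Set

noncomputable def blowupSolution (k : ℝ) (p : ℕ) (W t : ℝ) : ℝ :=
  W * (1 - k * ((p : ℝ) - 1) * t * W ^ (p - 1)) ^ (-(1 / ((p : ℝ) - 1)))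

section BlowupSolution

variable {p : ℕ} {k W t : ℝ}

theorem blowupSolution_pos (hW : 0 < W) (hbase : 0 < 1 - k * ((p : ℝ) - 1) * t * W ^ (p - 1)) :
    0 < blowupSolution k p W t :=
  mul_pos hW (Real.rpow_pos_of_pos hbase _)

theorem hasDerivAt_blowupSolution (hp : 1 < p)
    (hbase : 0 < 1 - k * ((p : ℝ) - 1) * t * W ^ (p - 1)) :
    HasDerivAt (blowupSolution k p W) (k * blowupSolution k p W t ^ p) t := by
  have hp1 : (p : ℝ) - 1 ≠ 0 := sub_ne_zero.2 (by exact_mod_cast hp.ne')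
  set c := k * ((p : ℝ) - 1) * W ^ (p - 1)
  set e := -(1 / ((p : ℝ) - 1))
  have hlin : HasDerivAt (fun u : ℝ => 1 - k * ((p : ℝ) - 1) * u * W ^ (p - 1)) (-c) t := by
    simpa [c, mul_comm, mul_assoc, mul_left_comm] using
      ((hasDerivAt_id t).const_mul c).const_sub (1 : ℝ)
  have hf : HasDerivAt (blowupSolution k p W)
      (W * (-c * e * (1 - k * ((p : ℝ) - 1) * t * W ^ (p - 1)) ^ (e - 1))) t :=
    (hlin.rpow_const (Or.inl hbase.ne')).const_mul W
  refine hf.congr_deriv ?_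
  have hpow : ((1 - k * ((p : ℝ) - 1) * t * W ^ (p - 1)) ^ e) ^ p
      = (1 - k * ((p : ℝ) - 1) * t * W ^ (p - 1)) ^ (e - 1) := by
    rw [← Real.rpow_natCast, ← Real.rpow_mul hbase.le]
    congr 1
    simp only [e]
    field_simp
    ring
  have hWp : W ^ p = W ^ (p - 1) * W := by
    rw [← pow_succ, Nat.sub_add_cancel hp.le]
  rw [blowupSolution, mul_pow, hpow, hWp]
  simp only [c, e]
  field_simp

theorem continuousAt_blowupSolution_coeff
    (hbase : 0 < 1 - k * ((p : ℝ) - 1) * t * W ^ (p - 1)) :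
    ContinuousAt (fun k' => blowupSolution k' p W t) k := by
  unfold blowupSolution
  have hlin : ContinuousAt (fun k' : ℝ => 1 - k' * ((p : ℝ) - 1) * t * W ^ (p - 1)) k := by
    fun_prop
  exact (hlin.rpow_const (Or.inl hbase.ne')).const_mul W

end BlowupSolution

section Comparison

variable {p : ℕ} {k W T : ℝ} {g g' : ℝ → ℝ}

theorem blowupSolution_le_of_lt_coeff (hp : 1 < p) {k' : ℝ} (hk' : k' < k) (hW : 0 < W)
    (hT : 0 ≤ T) (hbase : ∀ t ∈ Icc 0 T, 0 < 1 - k' * ((p : ℝ) - 1) * t * W ^ (p - 1))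
    (hg0 : W ≤ g 0) (hg : ∀ t ∈ Icc 0 T, HasDerivWithinAt g (g' t) (Icc 0 T) t)
    (hg' : ∀ t ∈ Icc 0 T, k * g t ^ p ≤ g' t) :
    blowupSolution k' p W T ≤ g T := by
  have hf (t) (ht : t ∈ Icc 0 T) := hasDerivAt_blowupSolution (W := W) hp (hbase t ht)
  refine image_le_of_deriv_right_lt_deriv_boundary'
    (fun t ht => (hf t ht).continuousAt.continuousWithinAt)
    (fun t ht => (hf t (Ico_subset_Icc_self ht)).hasDerivWithinAt) ?_
    (fun t ht => (hg t ht).continuousWithinAt)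
    (fun t ht => (hg t (Ico_subset_Icc_self ht)).mono_of_mem_nhdsWithin (Icc_mem_nhdsGE_of_mem ht))
    ?_ (right_mem_Icc.2 hT)
  · simpa [blowupSolution] using hg0
  · intro t ht hfg
    have hpos := pow_pos (blowupSolution_pos hW (hbase t (Ico_subset_Icc_self ht))) p
    calc k' * blowupSolution k' p W t ^ p < k * blowupSolution k' p W t ^ p := by gcongr
      _ = k * g t ^ p := by rw [hfg]
      _ ≤ g' t := hg' t (Ico_subset_Icc_self ht)

theorem blowupSolution_le (hp : 1 < p) (hW : 0 < W) (hT : 0 ≤ T)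
    (hbase : 0 < 1 - k * ((p : ℝ) - 1) * T * W ^ (p - 1))
    (hg0 : W ≤ g 0) (hg : ∀ t ∈ Icc 0 T, HasDerivWithinAt g (g' t) (Icc 0 T) t)
    (hg' : ∀ t ∈ Icc 0 T, k * g t ^ p ≤ g' t) :
    blowupSolution k p W T ≤ g T := by
  refine le_of_tendsto ((continuousAt_blowupSolution_coeff hbase).tendsto.mono_left
    (nhdsWithin_le_nhds (s := Iio k))) ?_
  filter_upwards [self_mem_nhdsWithin] with k' (hk' : k' < k)
  refine blowupSolution_le_of_lt_coeff hp hk' hW hT (fun t ht => ?_) hg0 hg hg'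
  have hc : 0 ≤ ((p : ℝ) - 1) * W ^ (p - 1) :=
    mul_nonneg (sub_nonneg.2 (by exact_mod_cast hp.le)) (pow_pos hW _).le
  have hkt : k' * t ≤ k * T ∨ k' * t ≤ 0 := by
    rcases le_total 0 k' with h | h
    · exact .inl (mul_le_mul hk'.le ht.2 ht.1 (h.trans hk'.le))
    · exact .inr (mul_nonpos_of_nonpos_of_nonneg h ht.1)
  rcases hkt with h | h <;> nlinarith [mul_le_mul_of_nonneg_right h hc]

end Comparison

theorem characteristic_comparison_general
    (p : ℕ) (hp : 2 ≤ p) (k : ℝ)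
    (Λ : Set (ℝ × ℝ))
    (hΛ : Λ = {q : ℝ × ℝ | 0 ≤ q.1 ∧ q.1 < 1 ∧ q.1 < q.2 ∧ q.2 < 2 - q.1})
    (w : ℝ × ℝ → ℝ) (Dw : ℝ × ℝ → ℝ × ℝ →L[ℝ] ℝ)
    (hD : ∀ q ∈ Λ, HasFDerivWithinAt w (Dw q) Λ q)
    (hineq : ∀ q ∈ Λ, k * w q ^ p ≤ Dw q (1, 1))
    (w₀ : ℝ → ℝ)
    (hw0 : ∀ x ∈ Set.Ioo (0 : ℝ) 2, w (0, x) = w₀ x)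
    (hw0pos : ∀ x ∈ Set.Ioo (0 : ℝ) 2, 0 < w₀ x) :
    ∀ x ∈ Set.Ioo (0 : ℝ) 2, ∀ t : ℝ, 0 ≤ t → (t, x + t) ∈ Λ →
      k * ((p : ℝ) - 1) * t * w₀ x ^ (p - 1) < 1 →
      w₀ x * (1 - k * ((p : ℝ) - 1) * t * w₀ x ^ (p - 1)) ^ (-(1 / ((p : ℝ) - 1)))
        ≤ w (t, x + t) := by
  intro x hx t ht hxt hblow
  have hseg : MapsTo (fun u => (u, x + u)) (Icc 0 t) Λ := by
    subst hΛ
    obtain ⟨-, ht1, -, hxt2⟩ : 0 ≤ t ∧ t < 1 ∧ t < x + t ∧ x + t < 2 - t := hxt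
    rintro u ⟨hu0, hut⟩
    exact ⟨hu0, by linarith, by linarith [hx.1], by linarith⟩
  have hchar (u : ℝ) : HasDerivAt (fun u => (u, x + u)) ((1, 1) : ℝ × ℝ) u :=
    (hasDerivAt_id u).prodMk ((hasDerivAt_id u).const_add x)
  exact blowupSolution_le (g := fun u => w (u, x + u)) hp (hw0pos x hx) ht (by linarith)
    (by simp [hw0 x hx])
    (fun u hu => (hD _ (hseg hu)).comp_hasDerivWithinAt u (hchar u).hasDerivWithinAt hseg)
    (fun u hu => hineq _ (hseg hu))

/-- Characteristic comparison in the backward light triangle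
`Λ̃ = {(t,x) : 0 ≤ t < 1, t < x < 2-t}`: if `w` is `C¹` on `Λ̃` with
`(∂_t w + ∂_x w) ≥ k w^p` on `Λ̃` and positive initial data `w₀` on `(0,2)`, then along the
characteristic `t ↦ (t, x+t)` the solution dominates the explicit blow-up solution. -/
theorem characteristic_comparison
    (p : ℕ) (hp : 2 ≤ p) (k : ℝ) (hk : 0 < k)
    (Λ : Set (ℝ × ℝ))
    (hΛ : Λ = {q : ℝ × ℝ | 0 ≤ q.1 ∧ q.1 < 1 ∧ q.1 < q.2 ∧ q.2 < 2 - q.1})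
    (w : ℝ × ℝ → ℝ) (Dw : ℝ × ℝ → ℝ × ℝ →L[ℝ] ℝ)
    (hD : ∀ q ∈ Λ, HasFDerivWithinAt w (Dw q) Λ q)
    (hDcont : ContinuousOn Dw Λ)
    (hineq : ∀ q ∈ Λ, k * w q ^ p ≤ Dw q (1, 1))
    (w₀ : ℝ → ℝ)
    (hw0 : ∀ x ∈ Set.Ioo (0 : ℝ) 2, w (0, x) = w₀ x)
    (hw0pos : ∀ x ∈ Set.Ioo (0 : ℝ) 2, 0 < w₀ x) :
    ∀ x ∈ Set.Ioo (0 : ℝ) 2, ∀ t : ℝ, 0 ≤ t → (t, x + t) ∈ Λ →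
      k * ((p : ℝ) - 1) * t * w₀ x ^ (p - 1) < 1 →
      w₀ x * (1 - k * ((p : ℝ) - 1) * t * w₀ x ^ (p - 1)) ^ (-(1 / ((p : ℝ) - 1)))
        ≤ w (t, x + t) :=
  characteristic_comparison_general p hp k Λ hΛ w Dw hD hineq w₀ hw0 hw0pos
end

section
/- Let p ≥ 2 be a natural number, k > 0, ε > 0, and α ∈ (0,1). Let Λ̃ = {(t,x) ∈ ℝ² : 0 ≤ t < 1 and t < x < 2 - t}. Then there is NO continuously differentiable function w : Λ̃ → ℝ such that w(0,x) = 2ε·(log(6/x))^α for all x ∈ (0,2) and (∂_t w + ∂_x w)(t,x) ≥ k·w(t,x)^p for all (t,x) ∈ Λ̃. -/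
open Set Filter Topology

/-! Along the characteristic `t ↦ (t, t + x₀)` the function `g t = w (t, t + x₀)` satisfies the
Riccati inequality `g' ≥ k g ^ p` with `g 0 = 2ε (log (6 / x₀)) ^ α`. Such a `g` stays above `g 0`,
so `g ^ (1 - p) + (p - 1) k t` is nonincreasing and positive, which bounds the lifespan by
`T < 1 / ((p - 1) k (g 0) ^ (p - 1))`. Since `log (6 / x₀) → ∞` as `x₀ → 0⁺`, this lifespan
becomes shorter than `1 / 2` for small `x₀`, while the characteristic stays in `Λ̃` up to
`t = 1 / 2`. -/

section Riccati

variable {g g' : ℝ → ℝ} {k T : ℝ}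

theorem HasDerivWithinAt.Ici_of_Icc {a b x : ℝ} (h : HasDerivWithinAt g (g' x) (Icc a b) x)
    (hx : x ∈ Ico a b) : HasDerivWithinAt g (g' x) (Ici x) x :=
  h.mono_of_mem_nhdsWithin <| mem_of_superset (Icc_mem_nhdsGE hx.2) (Icc_subset_Icc_left hx.1)

theorem le_image_of_deriv_ge_mul_pow {n : ℕ}
    (hg : ∀ t ∈ Icc 0 T, HasDerivWithinAt g (g' t) (Icc 0 T) t) (hk : 0 < k) (hg0 : 0 < g 0)
    (hineq : ∀ t ∈ Icc 0 T, k * g t ^ n ≤ g' t) : ∀ t ∈ Icc 0 T, g 0 ≤ g t :=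
  image_le_of_deriv_right_lt_deriv_boundary' continuousOn_const
    (fun _ _ => hasDerivWithinAt_const _ _ _) le_rfl
    (fun t ht => (hg t ht).continuousWithinAt)
    (fun t ht => (hg t (Ico_subset_Icc_self ht)).Ici_of_Icc ht)
    fun t ht hgt => by
      have hgt : 0 < g t := hgt ▸ hg0
      exact (by positivity : 0 < k * g t ^ n).trans_le (hineq t (Ico_subset_Icc_self ht))

theorem zpow_neg_sub_one_mul_pow_succ {G₀ : Type*} [GroupWithZero G₀] {x : G₀} (hx : x ≠ 0)
    (m : ℕ) :
    x ^ (-(m : ℤ) - 1) * x ^ (m + 1) = 1 := by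
  rw [← zpow_natCast, ← zpow_add₀ hx]
  push_cast
  simp

theorem mul_mul_pow_lt_one_of_deriv_ge_mul_pow {m : ℕ}
    (hg : ∀ t ∈ Icc 0 T, HasDerivWithinAt g (g' t) (Icc 0 T) t) (hT : 0 ≤ T) (hk : 0 < k)
    (hg0 : 0 < g 0) (hineq : ∀ t ∈ Icc 0 T, k * g t ^ (m + 1) ≤ g' t) :
    m * k * T * g 0 ^ m < 1 := by
  have hpos (t) (ht : t ∈ Icc 0 T) : 0 < g t :=
    hg0.trans_le (le_image_of_deriv_ge_mul_pow hg hk hg0 hineq t ht)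
  set φ : ℝ → ℝ := fun t => g t ^ (-(m : ℤ)) + m * k * t
  set φ' : ℝ → ℝ := fun t => -m * g t ^ (-(m : ℤ) - 1) * g' t + m * k
  have hφ (t) (ht : t ∈ Icc 0 T) : HasDerivWithinAt φ (φ' t) (Icc 0 T) t := by
    have hpow : HasDerivWithinAt (fun t => g t ^ (-(m : ℤ)))
        (((-m : ℤ) : ℝ) * g t ^ (-(m : ℤ) - 1) * g' t) (Icc 0 T) t :=
      (hasDerivAt_zpow _ _ (.inl (hpos t ht).ne')).comp_hasDerivWithinAt t (hg t ht)
    have hlin : HasDerivWithinAt (fun t : ℝ => m * k * t) (m * k) (Icc 0 T) t := by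
      simpa using ((hasDerivAt_id t).const_mul (m * k : ℝ)).hasDerivWithinAt
    exact (hpow.add hlin).congr_deriv (by simp [φ'])
  have hφ'_nonpos (t) (ht : t ∈ Icc 0 T) : φ' t ≤ 0 := calc
    φ' t ≤ -m * g t ^ (-(m : ℤ) - 1) * (k * g t ^ (m + 1)) + m * k := by
        have hzpow : 0 < g t ^ (-(m : ℤ) - 1) := zpow_pos (hpos t ht) _
        gcongr ?_ + _
        exact mul_le_mul_of_nonpos_left (hineq t ht)
          (mul_nonpos_of_nonpos_of_nonneg (neg_nonpos.2 m.cast_nonneg) hzpow.le)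
    _ = 0 := by
        linear_combination (-(m : ℝ) * k) * zpow_neg_sub_one_mul_pow_succ (hpos t ht).ne' m
  have hφT : φ T ≤ φ 0 :=
    image_le_of_deriv_right_le_deriv_boundary (B := fun _ => φ 0)
      (fun t ht => (hφ t ht).continuousWithinAt)
      (fun t ht => (hφ t (Ico_subset_Icc_self ht)).Ici_of_Icc ht) le_rfl continuousOn_const
      (fun _ _ => hasDerivWithinAt_const _ _ _) (fun t ht => hφ'_nonpos t (Ico_subset_Icc_self ht))
      ⟨hT, le_rfl⟩
  have hgT : 0 < g T ^ (-(m : ℤ)) := zpow_pos (hpos T ⟨hT, le_rfl⟩) _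
  have : m * k * T < (g 0 ^ m)⁻¹ := by
    simp only [φ, zpow_neg, zpow_natCast, mul_zero, add_zero] at hφT hgT
    linarith
  simpa [hg0.ne'] using mul_lt_mul_of_pos_right this (pow_pos hg0 m)

end Riccati

theorem tendsto_rpow_log_const_div_nhdsGT_zero {a α : ℝ} (ha : 0 < a) (hα : 0 < α) :
    Tendsto (fun x => Real.log (a / x) ^ α) (𝓝[>] 0) atTop := by
  simp_rw [div_eq_mul_inv]
  exact (tendsto_rpow_atTop hα).comp <| Real.tendsto_log_atTop.comp <|
    tendsto_inv_nhdsGT_zero.const_mul_atTop ha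

/-- There is no `C¹` function on the backward light triangle
`Λ̃ = {(t,x) : 0 ≤ t < 1, t < x < 2-t}` with initial data `2ε (log (6/x))^α` on `(0,2)`
satisfying the differential inequality `∂_t w + ∂_x w ≥ k w^p` on `Λ̃`. -/
theorem no_global_supersolution
    (p : ℕ) (hp : 2 ≤ p) (k ε α : ℝ) (hk : 0 < k) (hε : 0 < ε)
    (hα : α ∈ Set.Ioo (0 : ℝ) 1)
    (Λ : Set (ℝ × ℝ))
    (hΛ : Λ = {q : ℝ × ℝ | 0 ≤ q.1 ∧ q.1 < 1 ∧ q.1 < q.2 ∧ q.2 < 2 - q.1}) :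
    ¬ ∃ (w : ℝ × ℝ → ℝ) (Dw : ℝ × ℝ → ℝ × ℝ →L[ℝ] ℝ),
      (∀ q ∈ Λ, HasFDerivWithinAt w (Dw q) Λ q) ∧
      ContinuousOn Dw Λ ∧
      (∀ x ∈ Set.Ioo (0 : ℝ) 2, w (0, x) = 2 * ε * Real.log (6 / x) ^ α) ∧
      (∀ q ∈ Λ, k * w q ^ p ≤ Dw q (1, 1)) := by
  rintro ⟨w, Dw, hw, -, hinit, hde⟩
  obtain ⟨m, rfl⟩ : ∃ m, p = m + 1 := ⟨p - 1, by omega⟩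
  have hm : 0 < m := by omega
  have hlarge :
      Tendsto (fun x => m * k / 2 * (2 * ε * Real.log (6 / x) ^ α) ^ m) (𝓝[>] 0) atTop :=
    ((tendsto_pow_atTop hm.ne').comp ((tendsto_rpow_log_const_div_nhdsGT_zero (by norm_num)
      hα.1).const_mul_atTop (by positivity))).const_mul_atTop (by positivity)
  obtain ⟨x₀, hx₀, hx₀_pos, hx₀_lt⟩ :=
    ((hlarge.eventually_gt_atTop 1).and (Ioo_mem_nhdsGT one_pos)).exists
  have hchar (t) (ht : t ∈ Icc (0 : ℝ) (1 / 2)) : (t, t + x₀) ∈ Λ := by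
    rw [hΛ]
    exact ⟨ht.1, by linarith [ht.2], by linarith, by linarith [ht.2]⟩
  have hg (t) (ht : t ∈ Icc (0 : ℝ) (1 / 2)) :
      HasDerivWithinAt (fun t => w (t, t + x₀)) (Dw (t, t + x₀) (1, 1)) (Icc 0 (1 / 2)) t :=
    (hw _ (hchar t ht)).comp_hasDerivWithinAt t
      ((hasDerivAt_id t).prodMk ((hasDerivAt_id t).add_const x₀)).hasDerivWithinAt hchar
  have hg0 : w (0, 0 + x₀) = 2 * ε * Real.log (6 / x₀) ^ α := by
    simpa using hinit x₀ ⟨hx₀_pos, by linarith⟩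
  have hlog : 0 < Real.log (6 / x₀) := Real.log_pos (by rw [lt_div_iff₀ hx₀_pos]; linarith)
  have hlifespan := mul_mul_pow_lt_one_of_deriv_ge_mul_pow hg (by norm_num) hk
    (by rw [hg0]; positivity) fun t ht => hde _ (hchar t ht)
  rw [hg0] at hlifespan
  linarith
end

section
/- Let p ≥ 2 be a natural number, ε > 0, α ∈ (0,1), and t > 0. Define h(t,x) = 1 - (2ε)^{p-1}·(p-1)·t·(log(6/(x-t)))^{α(p-1)} for x with x - t ∈ (0,2), and let μ(t) = 6·exp(-((2ε)^{p-1}·(p-1)·t)^{-1/(α(p-1))}). Assume μ(t) < 2. Then: (i) ∂_x h(t,x) > 0 for all x with x - t ∈ (0,2); (ii) ∂²_x h(t,x) ≤ 0 for all x with x - t ∈ (0,2); (iii) h(t, t + μ(t)) = 0; and (iv) for all x with x - t ∈ (μ(t), 2), h(t,x) ≤ ∂_x h(t, t+μ(t)) · (x - t - μ(t)). -/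
/-!
Write `h(t, x) = 1 - C L^β` with `L = log (6 / (x - t))`, `C = (2ε)^{p-1}(p-1)t` and
`β = α(p-1)`. Since `dL/dx = -1/(x - t)`, one gets `∂ₓh = C β L^{β-1} / (x - t) > 0` and
`∂ₓ²h = -C β L^{β-2} (β - 1 + L) / (x - t)²`, which is `≤ 0` as soon as `L ≥ 1`, i.e. for
`x - t ≤ 6/e`; this range contains `(0, 2)`. The point `μ` is chosen so that `C L^β = 1`
there, and (iv) is the tangent-line inequality for the concave function `h(t, ·)` at `t + μ`.
-/

open Set Real

noncomputable def logProfile (a C β s : ℝ) : ℝ := 1 - C * log (a / s) ^ β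

noncomputable def logProfileDeriv (a C β s : ℝ) : ℝ := C * β * log (a / s) ^ (β - 1) / s

noncomputable def logProfileDeriv2 (a C β s : ℝ) : ℝ :=
  -(C * β) * log (a / s) ^ (β - 2) * (β - 1 + log (a / s)) / s ^ 2

theorem ConcaveOn.le_add_deriv_mul_sub {S : Set ℝ} {f : ℝ → ℝ} {x y : ℝ}
    (hf : ConcaveOn ℝ S f) (hx : x ∈ S) (hy : y ∈ S) (hfd : DifferentiableAt ℝ f x) :
    f y ≤ f x + deriv f x * (y - x) := by
  rcases lt_trichotomy x y with hxy | rfl | hyx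
  · have := hf.slope_le_deriv hx hy hxy hfd
    rw [slope_def_field, div_le_iff₀ (sub_pos.2 hxy)] at this
    linarith
  · simp
  · have := hf.deriv_le_slope hy hx hyx hfd
    rw [slope_def_field, le_div_iff₀ (sub_pos.2 hyx)] at this
    linarith

lemma hasDerivAt_log_div_s12 {a s : ℝ} (ha : a ≠ 0) (hs : s ≠ 0) :
    HasDerivAt (fun s => log (a / s)) (-s⁻¹) s := by
  have := ((hasDerivAt_inv hs).const_mul a).log (by simp [ha, hs])
  simp only [← div_eq_mul_inv] at this
  convert this using 1
  field_simp

lemma one_lt_log_div {a s : ℝ} (hs : s ∈ Ioo 0 (a / exp 1)) : 1 < log (a / s) := by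
  have h : exp 1 < a / s := by
    rw [lt_div_iff₀ hs.1, ← lt_div_iff₀' (exp_pos 1)]
    exact hs.2
  exact (lt_log_iff_exp_lt ((exp_pos 1).trans h)).2 h

lemma log_div_pos_of_mem_Ioo {a s : ℝ} (hs : s ∈ Ioo 0 (a / exp 1)) : 0 < log (a / s) :=
  one_pos.trans (one_lt_log_div hs)

lemma ne_zero_of_log_div_ne_zero {a s : ℝ} (hL : log (a / s) ≠ 0) : a ≠ 0 := by
  rintro rfl; simp at hL

lemma hasDerivAt_logProfile {a C β s : ℝ} (hs : s ≠ 0) (hL : 0 < log (a / s)) :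
    HasDerivAt (logProfile a C β) (logProfileDeriv a C β s) s := by
  have ha := ne_zero_of_log_div_ne_zero hL.ne'
  have : HasDerivAt (logProfile a C β) _ s :=
    (((hasDerivAt_log_div_s12 ha hs).rpow_const (p := β) (Or.inl hL.ne')).const_mul C).const_sub 1
  refine this.congr_deriv ?_
  unfold logProfileDeriv
  field_simp

lemma hasDerivAt_logProfileDeriv {a C β s : ℝ} (hs : s ≠ 0) (hL : 0 < log (a / s)) :
    HasDerivAt (logProfileDeriv a C β) (logProfileDeriv2 a C β s) s := by
  have ha := ne_zero_of_log_div_ne_zero hL.ne'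
  have key := (((hasDerivAt_log_div_s12 ha hs).rpow_const (p := β - 1) (Or.inl hL.ne')).const_mul
    (C * β)).mul (hasDerivAt_inv hs)
  have hfun : logProfileDeriv a C β = fun y => C * β * log (a / y) ^ (β - 1) * y⁻¹ :=
    funext fun y => div_eq_mul_inv _ _
  have hpow : log (a / s) ^ (β - 1) = log (a / s) ^ (β - 2) * log (a / s) := by
    rw [← rpow_add_one hL.ne']; ring_nf
  rw [hfun]
  refine key.congr_deriv ?_
  unfold logProfileDeriv2
  rw [show β - 1 - 1 = β - 2 by ring, hpow]
  field_simp
  ring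

lemma logProfileDeriv_pos {a C β s : ℝ} (hC : 0 < C) (hβ : 0 < β) (hs : 0 < s)
    (hL : 0 < log (a / s)) : 0 < logProfileDeriv a C β s := by
  unfold logProfileDeriv; positivity

lemma logProfileDeriv2_nonpos {a C β s : ℝ} (hC : 0 ≤ C) (hβ : 0 ≤ β) (hL₀ : 0 ≤ log (a / s))
    (hL : 1 - β ≤ log (a / s)) : logProfileDeriv2 a C β s ≤ 0 := by
  unfold logProfileDeriv2
  refine div_nonpos_of_nonpos_of_nonneg (mul_nonpos_of_nonpos_of_nonneg
    (mul_nonpos_of_nonpos_of_nonneg ?_ (rpow_nonneg hL₀ _)) (by linarith)) (sq_nonneg s)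
  exact neg_nonpos.2 (mul_nonneg hC hβ)

section OnConcavityInterval

variable {a C β s : ℝ}

lemma deriv_logProfile_eqOn :
    EqOn (deriv (logProfile a C β)) (logProfileDeriv a C β) (Ioo 0 (a / exp 1)) := fun _ hs =>
  (hasDerivAt_logProfile hs.1.ne' (log_div_pos_of_mem_Ioo hs)).deriv

lemma concaveOn_logProfile (hC : 0 ≤ C) (hβ : 0 ≤ β) :
    ConcaveOn ℝ (Ioo 0 (a / exp 1)) (logProfile a C β) := by
  have hf {s} (hs : s ∈ Ioo 0 (a / exp 1)) :=
    hasDerivAt_logProfile (C := C) (β := β) hs.1.ne' (log_div_pos_of_mem_Ioo hs)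
  refine concaveOn_of_hasDerivWithinAt2_nonpos (f' := logProfileDeriv a C β)
    (f'' := logProfileDeriv2 a C β) (convex_Ioo _ _)
    (fun s hs => (hf hs).continuousAt.continuousWithinAt) ?_ ?_ ?_ <;>
    rw [interior_Ioo] <;> intro s hs
  · exact (hf hs).hasDerivWithinAt
  · exact (hasDerivAt_logProfileDeriv hs.1.ne' (log_div_pos_of_mem_Ioo hs)).hasDerivWithinAt
  · exact logProfileDeriv2_nonpos hC hβ (log_div_pos_of_mem_Ioo hs).le
      (by linarith [one_lt_log_div hs])

lemma deriv_deriv_logProfile_nonpos (hC : 0 ≤ C) (hβ : 0 ≤ β) (hs : s ∈ Ioo 0 (a / exp 1)) :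
    deriv (deriv (logProfile a C β)) s ≤ 0 := by
  have hev : deriv (logProfile a C β) =ᶠ[nhds s] logProfileDeriv a C β :=
    Filter.eventually_of_mem (isOpen_Ioo.mem_nhds hs) deriv_logProfile_eqOn
  rw [hev.deriv_eq, (hasDerivAt_logProfileDeriv hs.1.ne' (log_div_pos_of_mem_Ioo hs)).deriv]
  exact logProfileDeriv2_nonpos hC hβ (log_div_pos_of_mem_Ioo hs).le
    (by linarith [one_lt_log_div hs])

end OnConcavityInterval

lemma logProfile_eq_zero {a C β : ℝ} (ha : a ≠ 0) (hC : 0 < C) (hβ : β ≠ 0) :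
    logProfile a C β (a * exp (-C ^ (-(1 / β)))) = 0 := by
  rw [logProfile, div_mul_cancel_left₀ ha, ← exp_neg, neg_neg, log_exp, ← rpow_mul hC.le,
    show -(1 / β) * β = -1 by field_simp, rpow_neg_one, mul_inv_cancel₀ hC.ne', sub_self]

lemma two_le_six_div_exp_one : (2 : ℝ) ≤ 6 / exp 1 := by
  rw [le_div_iff₀ (exp_pos 1)]
  linarith [exp_one_lt_d9]

/-- Properties of `h(t,·)` and the singularity curve `x = t + μ(t)`: for fixed `t > 0`, with
`H x = 1 - (2ε)^{p-1}(p-1) t (log (6/(x-t)))^{α(p-1)}` and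
`μ = 6 exp(-((2ε)^{p-1}(p-1) t)^{-1/(α(p-1))}) < 2`, one has `∂_x H > 0` and `∂²_x H ≤ 0` on
`{x : x - t ∈ (0,2)}`, `H (t+μ) = 0`, and the concavity bound
`H x ≤ ∂_x H (t+μ) (x - t - μ)` for `x - t ∈ (μ, 2)`. -/
theorem singularity_curve_properties
    (p : ℕ) (hp : 2 ≤ p) (ε α t : ℝ) (hε : 0 < ε) (hα : α ∈ Set.Ioo (0 : ℝ) 1)
    (ht : 0 < t)
    (H : ℝ → ℝ)
    (hH : ∀ x, H x =
      1 - (2 * ε) ^ (p - 1) * ((p : ℝ) - 1) * t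
        * Real.log (6 / (x - t)) ^ (α * ((p : ℝ) - 1)))
    (μ : ℝ)
    (hμ : μ = 6 * Real.exp
      (-((2 * ε) ^ (p - 1) * ((p : ℝ) - 1) * t) ^ (-(1 / (α * ((p : ℝ) - 1))))))
    (hμ2 : μ < 2) :
    (∀ x : ℝ, x - t ∈ Set.Ioo (0 : ℝ) 2 → 0 < deriv H x) ∧
    (∀ x : ℝ, x - t ∈ Set.Ioo (0 : ℝ) 2 → deriv (deriv H) x ≤ 0) ∧
    H (t + μ) = 0 ∧
    (∀ x : ℝ, x - t ∈ Set.Ioo μ 2 → H x ≤ deriv H (t + μ) * (x - t - μ)) := by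
  set C := (2 * ε) ^ (p - 1) * ((p : ℝ) - 1) * t
  set β := α * ((p : ℝ) - 1)
  have hp₁ : (0 : ℝ) < p - 1 := by linarith [show (2 : ℝ) ≤ p by exact_mod_cast hp]
  have hC : 0 < C := mul_pos (mul_pos (pow_pos (by linarith) _) hp₁) ht
  have hβ : 0 < β := mul_pos hα.1 hp₁
  have hH' : H = fun x => logProfile 6 C β (x - t) := funext hH
  have hderiv : ∀ x, deriv H x = deriv (logProfile 6 C β) (x - t) := fun x => by
    rw [hH', deriv_comp_sub_const]
  have hdom : ∀ s ∈ Ioo (0 : ℝ) 2, s ∈ Ioo 0 (6 / exp 1) := fun s hs =>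
    Ioo_subset_Ioo_right two_le_six_div_exp_one hs
  have hμ₀ : 0 < μ := by rw [hμ]; positivity
  have hzero : logProfile 6 C β μ = 0 := hμ ▸ logProfile_eq_zero (by norm_num) hC hβ.ne'
  refine ⟨fun x hx => ?_, fun x hx => ?_, by simpa [hH'] using hzero, fun x hx => ?_⟩
  · rw [hderiv, deriv_logProfile_eqOn (hdom _ hx)]
    exact logProfileDeriv_pos hC hβ hx.1 (log_div_pos_of_mem_Ioo (hdom _ hx))
  · rw [funext hderiv, deriv_comp_sub_const]
    exact deriv_deriv_logProfile_nonpos hC.le hβ.le (hdom _ hx)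
  · have hμD : μ ∈ Ioo 0 (6 / exp 1) := hdom μ ⟨hμ₀, hμ2⟩
    have htangent := (concaveOn_logProfile hC.le hβ.le).le_add_deriv_mul_sub hμD
      (hdom _ ⟨hμ₀.trans hx.1, hx.2⟩) (hasDerivAt_logProfile hμD.1.ne'
        (log_div_pos_of_mem_Ioo hμD)).differentiableAt
    rw [hderiv, add_sub_cancel_left, hH']
    linarith
end

section
/- Let C⁰⁰, C¹¹, C⁰¹ be real numbers, β ∈ (0,1), δ = √(1-β²), and F = C⁰⁰ + C¹¹β² - 2C⁰¹β, and assume F ≠ 0. Let I ⊆ ℝ be an open interval and let w : I → ℝ be twice continuously differentiable with w''(s) = (w'(s))² for all s ∈ I. Define v(t,x) = (δ²/F)·w((t - βx)/δ) on the open set Ω = {(t,x) ∈ ℝ² : (t - βx)/δ ∈ I}. Then v satisfies ∂²_t v - ∂²_x v = C⁰⁰(∂_t v)² + C¹¹(∂_x v)² + 2C⁰¹(∂_t v)(∂_x v) on Ω. -/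
open Filter Topology

/-!
Along the phase `s = (t - βx)/δ` the function `v` is `c · w(s)` with `c = δ²/F`, so by the chain rule
`v_tt = c w''/δ²`, `v_xx = c β² w''/δ²`, `v_t = c w'/δ`, `v_x = -c β w'/δ`. Hence `□v = c (1 - β²) w''/δ²
= c w''`, while the quadratic form equals `c² (w')² F/δ² = c (w')²`; the ODE `w'' = (w')²` makes them agree.
-/

theorem hasDerivAt_const_mul_comp_affine {w : ℝ → ℝ} {d : ℝ} (c p r s : ℝ)
    (hw : HasDerivAt w d (p * s + r)) :
    HasDerivAt (fun y => c * w (p * y + r)) (c * p * d) s := by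
  have hφ : HasDerivAt (fun y => p * y + r) p s := by
    simpa using ((hasDerivAt_id s).const_mul p).add_const r
  exact ((hw.comp s hφ).const_mul c).congr_deriv (by ring)

theorem deriv_deriv_const_mul_comp_affine {w w' w'' : ℝ → ℝ} {U : Set ℝ} (hU : IsOpen U)
    (hw : ∀ z ∈ U, HasDerivAt w (w' z) z) (hw' : ∀ z ∈ U, HasDerivAt w' (w'' z) z)
    {c p r s : ℝ} (hs : p * s + r ∈ U) :
    deriv (deriv fun y => c * w (p * y + r)) s = c * p ^ 2 * w'' (p * s + r) := by
  have hnhds : {y | p * y + r ∈ U} ∈ 𝓝 s :=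
    (hU.preimage (by fun_prop)).mem_nhds hs
  have hderiv : deriv (fun y => c * w (p * y + r)) =ᶠ[𝓝 s] fun y => (c * p) * w' (p * y + r) := by
    filter_upwards [hnhds] with y hy
    exact (hasDerivAt_const_mul_comp_affine c p r y (hw _ hy)).deriv
  rw [hderiv.deriv_eq, (hasDerivAt_const_mul_comp_affine (c * p) p r s (hw' _ hs)).deriv]
  ring

/-- The Lorentz ansatz: if `w'' = (w')²` on an open interval `I`, then
`v(t,x) = (δ²/F) w((t - βx)/δ)` with `δ = √(1-β²)` and `F = C⁰⁰ + C¹¹β² - 2C⁰¹β ≠ 0` solves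
`∂²_t v - ∂²_x v = C⁰⁰ v_t² + C¹¹ v_x² + 2C⁰¹ v_t v_x` wherever `(t - βx)/δ ∈ I`. -/
theorem lorentz_ansatz_reduction
    (C00 C11 C01 β : ℝ) (hβ : β ∈ Set.Ioo (0 : ℝ) 1)
    (δ : ℝ) (hδ : δ = Real.sqrt (1 - β ^ 2))
    (F : ℝ) (hF : F = C00 + C11 * β ^ 2 - 2 * C01 * β) (hF0 : F ≠ 0)
    (I : Set ℝ) (hI : ∃ a b : ℝ, I = Set.Ioo a b)
    (w w' : ℝ → ℝ)
    (hw1 : ∀ s ∈ I, HasDerivAt w (w' s) s)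
    (hw2 : ∀ s ∈ I, HasDerivAt w' (w' s ^ 2) s)
    (v : ℝ → ℝ → ℝ)
    (hv : ∀ t x, v t x = δ ^ 2 / F * w ((t - β * x) / δ)) :
    ∀ t x : ℝ, (t - β * x) / δ ∈ I →
      deriv (fun t' => deriv (fun t'' => v t'' x) t') t
        - deriv (fun x' => deriv (fun x'' => v t x'') x') x
      = C00 * (deriv (fun t' => v t' x) t) ^ 2
        + C11 * (deriv (fun x' => v t x') x) ^ 2
        + 2 * C01 * (deriv (fun t' => v t' x) t) * (deriv (fun x' => v t x') x) := by
  intro t x hs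
  have hδ2 : δ ^ 2 = 1 - β ^ 2 := by
    rw [hδ, Real.sq_sqrt]; nlinarith [hβ.1, hβ.2]
  have hδ0 : δ ≠ 0 := by
    rintro rfl; nlinarith [hβ.1, hβ.2]
  have hI_open : IsOpen I := by
    obtain ⟨a, b, rfl⟩ := hI; exact isOpen_Ioo
  have hphase_t : δ⁻¹ * t + -(β * x) / δ = (t - β * x) / δ := by ring
  have hphase_x : -β / δ * x + t / δ = (t - β * x) / δ := by ring
  have hslice_t : (fun t' => v t' x) = fun y => δ ^ 2 / F * w (δ⁻¹ * y + -(β * x) / δ) := by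
    funext y; rw [hv]; ring_nf
  have hslice_x : (fun x' => v t x') = fun y => δ ^ 2 / F * w (-β / δ * y + t / δ) := by
    funext y; rw [hv]; ring_nf
  rw [hslice_t, hslice_x,
    deriv_deriv_const_mul_comp_affine hI_open hw1 hw2 (hphase_t ▸ hs),
    deriv_deriv_const_mul_comp_affine hI_open hw1 hw2 (hphase_x ▸ hs),
    (hasDerivAt_const_mul_comp_affine _ _ _ t (hw1 _ (hphase_t ▸ hs))).deriv,
    (hasDerivAt_const_mul_comp_affine _ _ _ x (hw1 _ (hphase_x ▸ hs))).deriv,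
    hphase_t, hphase_x]
  field_simp
  linear_combination (-(w' ((t - β * x) / δ)) ^ 2 * F) * hδ2
    + (δ ^ 2 * (w' ((t - β * x) / δ)) ^ 2) * hF
end

section
/- Let C⁰⁰, C¹¹, C⁰¹ be real numbers, β ∈ (0,1), δ = √(1-β²), b > 0, and F = C⁰⁰ + C¹¹β² - 2C⁰¹β, and assume F ≠ 0. Define v(t,x) = (δ²/F)·log(b/(b - t + βx)) on the open set Ω = {(t,x) ∈ ℝ² : t - βx < b}. Then v is smooth on Ω and satisfies ∂²_t v - ∂²_x v = C⁰⁰(∂_t v)² + C¹¹(∂_x v)² + 2C⁰¹(∂_t v)(∂_x v) on Ω, and |v(t,0)| → ∞ as t → b⁻. -/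
open Set Filter

private lemma hasDerivAt_t (c β b x t : ℝ) (hb : 0 < b) (h : 0 < b - t + β * x) :
    HasDerivAt (fun t' => c * Real.log (b / (b - t' + β * x))) (c / (b - t + β * x)) t := by
  have hO : IsOpen {t' : ℝ | 0 < b - t' + β * x} :=
    isOpen_lt continuous_const (by continuity)
  have hinner : HasDerivAt (fun t' : ℝ => b - t' + β * x) (-1) t :=
    ((hasDerivAt_id t).const_sub b).add_const (β * x)
  have hlog : HasDerivAt (fun t' => Real.log (b - t' + β * x)) (-1 / (b - t + β * x)) t :=
    hinner.log h.ne'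
  have hg : HasDerivAt (fun t' => c * (Real.log b - Real.log (b - t' + β * x)))
      (c / (b - t + β * x)) t := by
    have := ((hasDerivAt_const t (Real.log b)).sub hlog).const_mul c
    exact this.congr_deriv (by ring)
  refine hg.congr_of_eventuallyEq ?_
  filter_upwards [hO.mem_nhds h] with t' ht'
  rw [Real.log_div hb.ne' (ht' : (0:ℝ) < _).ne']

private lemma hasDerivAt_x (c β b t x : ℝ) (hb : 0 < b) (h : 0 < b - t + β * x) :
    HasDerivAt (fun x' => c * Real.log (b / (b - t + β * x'))) (-(c * β) / (b - t + β * x)) x := by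
  have hO : IsOpen {x' : ℝ | 0 < b - t + β * x'} :=
    isOpen_lt continuous_const (by continuity)
  have hinner : HasDerivAt (fun x' : ℝ => b - t + β * x') β x :=
    (((hasDerivAt_id x).const_mul β).const_add (b - t)).congr_deriv (mul_one β)
  have hlog : HasDerivAt (fun x' => Real.log (b - t + β * x')) (β / (b - t + β * x)) x :=
    hinner.log h.ne'
  have hg : HasDerivAt (fun x' => c * (Real.log b - Real.log (b - t + β * x')))
      (-(c * β) / (b - t + β * x)) x := by
    have := ((hasDerivAt_const x (Real.log b)).sub hlog).const_mul c
    exact this.congr_deriv (by ring)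
  refine hg.congr_of_eventuallyEq ?_
  filter_upwards [hO.mem_nhds h] with x' hx'
  rw [Real.log_div hb.ne' (hx' : (0:ℝ) < _).ne']

/-- The explicit logarithmic solution `v(t,x) = (δ²/F) log(b/(b - t + βx))` is smooth on
`Ω = {t - βx < b}`, solves `∂²_t v - ∂²_x v = C⁰⁰ v_t² + C¹¹ v_x² + 2C⁰¹ v_t v_x` there,
and `|v(t,0)| → ∞` as `t → b⁻`. -/
theorem explicit_log_solution_blowup
    (C00 C11 C01 β b : ℝ) (hβ : β ∈ Set.Ioo (0 : ℝ) 1) (hb : 0 < b)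
    (δ : ℝ) (hδ : δ = Real.sqrt (1 - β ^ 2))
    (F : ℝ) (hF : F = C00 + C11 * β ^ 2 - 2 * C01 * β) (hF0 : F ≠ 0)
    (v : ℝ → ℝ → ℝ)
    (hv : ∀ t x, v t x = δ ^ 2 / F * Real.log (b / (b - t + β * x)))
    (Ω : Set (ℝ × ℝ)) (hΩ : Ω = {q : ℝ × ℝ | q.1 - β * q.2 < b}) :
    ContDiffOn ℝ (⊤ : ℕ∞) (fun q : ℝ × ℝ => v q.1 q.2) Ω ∧
    (∀ t x : ℝ, (t, x) ∈ Ω →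
      deriv (fun t' => deriv (fun t'' => v t'' x) t') t
        - deriv (fun x' => deriv (fun x'' => v t x'') x') x
      = C00 * (deriv (fun t' => v t' x) t) ^ 2
        + C11 * (deriv (fun x' => v t x') x) ^ 2
        + 2 * C01 * (deriv (fun t' => v t' x) t) * (deriv (fun x' => v t x') x)) ∧
    Filter.Tendsto (fun t => |v t 0|) (nhdsWithin b (Set.Iio b)) Filter.atTop := by
  obtain ⟨hβ0, hβ1⟩ := hβ
  have hβsq : (0:ℝ) < 1 - β ^ 2 := by nlinarith
  have hδ2 : δ ^ 2 = 1 - β ^ 2 := by rw [hδ, Real.sq_sqrt hβsq.le]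
  set c : ℝ := δ ^ 2 / F with hc
  have hc0 : c ≠ 0 := div_ne_zero (by rw [hδ2]; exact hβsq.ne') hF0
  have hu : ∀ t x : ℝ, (t, x) ∈ Ω → 0 < b - t + β * x := by
    intro t x h
    rw [hΩ] at h
    simp only [Set.mem_setOf_eq] at h
    linarith
  refine ⟨?_, ?_, ?_⟩
  · -- smoothness
    have hU : ContDiff ℝ (⊤ : ℕ∞) (fun q : ℝ × ℝ => b - q.1 + β * q.2) :=
      (contDiff_const.sub contDiff_fst).add (contDiff_const.mul contDiff_snd)
    have hmaps : Set.MapsTo (fun q : ℝ × ℝ => b - q.1 + β * q.2) Ω {(0:ℝ)}ᶜ := by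
      intro q hq
      exact (hu q.1 q.2 (by simpa using hq)).ne'
    have hmain : ContDiffOn ℝ (⊤ : ℕ∞)
        (fun q : ℝ × ℝ => c * (Real.log b - Real.log (b - q.1 + β * q.2))) Ω :=
      contDiffOn_const.mul (contDiffOn_const.sub
        (Real.contDiffOn_log.comp hU.contDiffOn hmaps))
    refine hmain.congr ?_
    intro q hq
    rw [hv, Real.log_div hb.ne' (hu q.1 q.2 (by simpa using hq)).ne']
  · -- PDE
    intro t x hmem
    have hux := hu t x hmem
    set u : ℝ := b - t + β * x with hu_def
    have hvt : (fun t'' => v t'' x) = fun t'' => c * Real.log (b / (b - t'' + β * x)) := by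
      funext t''; rw [hv]
    have hvx : (fun x'' => v t x'') = fun x'' => c * Real.log (b / (b - t + β * x'')) := by
      funext x''; rw [hv]
    have hO : IsOpen {t' : ℝ | 0 < b - t' + β * x} :=
      isOpen_lt continuous_const (by continuity)
    have hOx : IsOpen {x' : ℝ | 0 < b - t + β * x'} :=
      isOpen_lt continuous_const (by continuity)
    -- first derivatives
    have hd1t : deriv (fun t' => v t' x) t = c / u := by
      rw [show (fun t' => v t' x) = fun t' => c * Real.log (b / (b - t' + β * x)) from hvt]
      exact (hasDerivAt_t c β b x t hb hux).deriv
    have hd1x : deriv (fun x' => v t x') x = -(c * β) / u := by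
      rw [show (fun x' => v t x') = fun x' => c * Real.log (b / (b - t + β * x')) from hvx]
      exact (hasDerivAt_x c β b t x hb hux).deriv
    -- second derivative in t
    have hd2t : deriv (fun t' => deriv (fun t'' => v t'' x) t') t = c / u ^ 2 := by
      have heq : (fun t' => deriv (fun t'' => v t'' x) t') =ᶠ[nhds t]
          fun t' => c * (b - t' + β * x)⁻¹ := by
        filter_upwards [hO.mem_nhds hux] with t' ht'
        rw [hvt]
        rw [(hasDerivAt_t c β b x t' hb ht').deriv, div_eq_mul_inv]
      rw [heq.deriv_eq]
      have hinner : HasDerivAt (fun t' : ℝ => b - t' + β * x) (-1) t :=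
        ((hasDerivAt_id t).const_sub b).add_const (β * x)
      have := (hinner.inv hux.ne').const_mul c
      refine this.deriv.trans ?_
      rw [hu_def]; ring
    -- second derivative in x
    have hd2x : deriv (fun x' => deriv (fun x'' => v t x'') x') x = c * β * β / u ^ 2 := by
      have heq : (fun x' => deriv (fun x'' => v t x'') x') =ᶠ[nhds x]
          fun x' => -(c * β) * (b - t + β * x')⁻¹ := by
        filter_upwards [hOx.mem_nhds hux] with x' hx'
        have hvx' : (fun x'' => v t x'') = fun x'' => c * Real.log (b / (b - t + β * x'')) := by
          funext x''; rw [hv]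
        rw [hvx']
        rw [(hasDerivAt_x c β b t x' hb hx').deriv, div_eq_mul_inv]
      rw [heq.deriv_eq]
      have hinner : HasDerivAt (fun x' : ℝ => b - t + β * x') β x :=
        (((hasDerivAt_id x).const_mul β).const_add (b - t)).congr_deriv (mul_one β)
      have := (hinner.inv hux.ne').const_mul (-(c * β))
      refine this.deriv.trans ?_
      rw [hu_def]; ring
    rw [hd1t, hd1x, hd2t, hd2x]
    have hcF : c * F = 1 - β ^ 2 := by rw [hc]; field_simp [hδ2]; exact hδ2
    have key : c - c * β * β = c ^ 2 * F := by linear_combination (-c) * hcF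
    rw [div_sub_div_same, key, hF]
    field_simp [hux.ne']
    ring
  · -- blow up
    have h1 : Tendsto (fun t => b - t) (nhdsWithin b (Set.Iio b)) (nhdsWithin 0 (Set.Ioi 0)) := by
      apply tendsto_nhdsWithin_of_tendsto_nhds_of_eventually_within
      · have : Tendsto (fun t : ℝ => b - t) (nhds b) (nhds (b - b)) :=
          (continuous_const.sub continuous_id).tendsto b
        simpa using this.mono_left nhdsWithin_le_nhds
      · filter_upwards [self_mem_nhdsWithin] with t ht
        simp only [Set.mem_Iio] at ht
        exact Set.mem_Ioi.2 (by linarith)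
    have h2 : Tendsto (fun t => (b - t)⁻¹) (nhdsWithin b (Set.Iio b)) atTop :=
      tendsto_inv_nhdsGT_zero.comp h1
    have h3 : Tendsto (fun t => b * (b - t)⁻¹) (nhdsWithin b (Set.Iio b)) atTop :=
      h2.const_mul_atTop hb
    have h4 : Tendsto (fun t => Real.log (b / (b - t))) (nhdsWithin b (Set.Iio b)) atTop := by
      simpa [div_eq_mul_inv, Function.comp_def] using Real.tendsto_log_atTop.comp h3
    have h5 : Tendsto (fun t => |c| * |Real.log (b / (b - t))|)
        (nhdsWithin b (Set.Iio b)) atTop :=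
      (tendsto_abs_atTop_atTop.comp h4).const_mul_atTop (abs_pos.2 hc0)
    refine h5.congr ?_
    intro t
    rw [hv, ← abs_mul]
    norm_num
end

section
/- Let n ≥ 1 be an integer and let σ > (n+1)/2 be a real number. Then there exists a constant C > 0, depending only on n and σ, such that for all β ∈ (1/2, 1) and all b ∈ (0,1): ∫_{{x ∈ ℝⁿ : ‖x‖ < b}} (b + β·x₁)^{-σ} dx ≤ C · b^{n-σ} · (1-β²)^{(n+1-2σ)/2}. -/
/-! Write `u = b + β x₁` and `A = b(1-β)`. On the ball, `u ≥ A`, `u ≥ (b + x₁)/2` and, because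
`xᵢ² ≤ (b - x₁)(b + x₁)`, also `u ≥ xᵢ²/(4b)` for `i ≥ 2`. Splitting `σ = σ₁ + (n-1)s` with
`σ₁ > 1` and `s > 1/2`, the integrand is therefore dominated by the tensor product
`max(A, (b + x₁)/2)^{-σ₁} ∏ᵢ max(A, xᵢ²/(4b))^{-s}`, whose one-dimensional factors integrate to
`≍ A^{1-σ₁}` and `≍ (bA)^{1/2} A^{-s}`. The product is `≍ b^{(n-1)/2} A^{(n+1)/2-σ}`, and since
the exponent is negative, `A ≥ b(1-β²)/2` finishes the estimate. -/

open MeasureTheory Set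
open scoped ENNReal

theorem lintegral_fin_prod_eq_prod {n : ℕ} {E : Type*} [MeasurableSpace E]
    {μ : Fin n → Measure E} [∀ i, SigmaFinite (μ i)] (f : Fin n → E → ℝ≥0∞)
    (hf : ∀ i, Measurable (f i)) :
    ∫⁻ x, ∏ i, f i (x i) ∂Measure.pi μ = ∏ i, ∫⁻ t, f i t ∂μ i := by
  induction n with
  | zero => simp
  | succ n ih =>
    calc ∫⁻ x, ∏ i, f i (x i) ∂Measure.pi μ
        = ∫⁻ x : E × (Fin n → E), f 0 x.1 * ∏ i : Fin n, f i.succ (x.2 i)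
            ∂(μ 0).prod (Measure.pi fun i ↦ μ i.succ) := by
          rw [← ((measurePreserving_piFinSuccAbove μ 0).symm).lintegral_comp_emb
            (MeasurableEquiv.measurableEmbedding _)]
          simp_rw [MeasurableEquiv.piFinSuccAbove_symm_apply, Fin.insertNthEquiv,
            Fin.prod_univ_succ, Fin.insertNth_zero, Equiv.coe_fn_mk, Fin.cons_succ,
            Fin.zero_succAbove, cast_eq, Fin.cons_zero]
      _ = (∫⁻ t, f 0 t ∂μ 0) * ∏ i : Fin n, ∫⁻ t, f i.succ t ∂μ i.succ := by
          have hg : Measurable fun y : Fin n → E ↦ ∏ i : Fin n, f i.succ (y i) :=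
            Finset.measurable_prod _ fun i _ ↦ (hf i.succ).comp (measurable_pi_apply i)
          rw [← ih (fun i ↦ f i.succ) (fun i ↦ hf i.succ),
            ← lintegral_prod_mul (hf 0).aemeasurable hg.aemeasurable]
      _ = ∏ i, ∫⁻ t, f i t ∂μ i := by rw [Fin.prod_univ_succ]

theorem lintegral_comp_abs (f : ℝ → ℝ≥0∞) : ∫⁻ x, f |x| = 2 * ∫⁻ x in Ioi 0, f x := by
  have h_pos : ∫⁻ x in Ioi 0, f |x| = ∫⁻ x in Ioi 0, f x :=
    setLIntegral_congr_fun measurableSet_Ioi fun x hx ↦ by rw [abs_of_pos hx]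
  have h_neg : ∫⁻ x in Iic 0, f |x| = ∫⁻ x in Ioi 0, f x := by
    rw [setLIntegral_congr Iio_ae_eq_Iic.symm, ← h_pos, ← lintegral_indicator measurableSet_Iio,
      ← lintegral_indicator measurableSet_Ioi, ← lintegral_neg_eq_self]
    congr 1 with x
    simp [indicator, abs_neg]
  rw [← lintegral_add_compl _ (measurableSet_Ioi (a := (0 : ℝ))), compl_Ioi, h_pos, h_neg, two_mul]

theorem lintegral_Ioi_rpow_of_lt {r c : ℝ} (hr : r < -1) (hc : 0 < c) :
    ∫⁻ t in Ioi c, ENNReal.ofReal (t ^ r) = ENNReal.ofReal (c ^ (r + 1) / -(r + 1)) := by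
  rw [← ofReal_integral_eq_lintegral_ofReal (integrableOn_Ioi_rpow_of_lt hr hc)
      (ae_restrict_of_forall_mem measurableSet_Ioi fun t ht ↦ Real.rpow_nonneg (hc.trans ht).le _),
    integral_Ioi_rpow_of_lt hr hc, div_neg, neg_div]

theorem lintegral_Ioi_max_rpow_neg {a c p q : ℝ} (ha : 0 < a) (hc : 0 < c) (hq : 0 < q)
    (hpq : 1 < p * q) :
    ∫⁻ t in Ioi 0, ENNReal.ofReal (max a (c * t ^ q) ^ (-p)) =
      ENNReal.ofReal (p * q / (p * q - 1) * (a / c) ^ q⁻¹ * a ^ (-p)) := by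
  set t₀ := (a / c) ^ q⁻¹
  have ht₀ : 0 < t₀ := by positivity
  have h_le_iff : ∀ t, 0 < t → (c * t ^ q ≤ a ↔ t ≤ t₀) := fun t ht ↦ by
    rw [Real.le_rpow_inv_iff_of_pos ht.le (by positivity) hq, le_div_iff₀' hc]
  have h_near : ∫⁻ t in Ioc 0 t₀, ENNReal.ofReal (max a (c * t ^ q) ^ (-p)) =
      ENNReal.ofReal (t₀ * a ^ (-p)) := by
    rw [setLIntegral_congr_fun measurableSet_Ioc fun t ht ↦ by
        rw [max_eq_left ((h_le_iff t ht.1).2 ht.2)],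
      setLIntegral_const, Real.volume_Ioc, sub_zero, ENNReal.ofReal_mul ht₀.le, mul_comm]
  have h_far : ∫⁻ t in Ioi t₀, ENNReal.ofReal (max a (c * t ^ q) ^ (-p)) =
      ENNReal.ofReal (c ^ (-p) * (t₀ ^ (-(p * q) + 1) / -(-(p * q) + 1))) := by
    have h_pow : ∀ t ∈ Ioi t₀, ENNReal.ofReal (max a (c * t ^ q) ^ (-p)) =
        ENNReal.ofReal (c ^ (-p)) * ENNReal.ofReal (t ^ (-(p * q))) := fun t ht ↦ by
      have ht0 : 0 < t := ht₀.trans ht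
      rw [max_eq_right (not_le.1 fun h ↦ (not_le.2 ht) ((h_le_iff t ht0).1 h)).le,
        Real.mul_rpow hc.le (by positivity), ← Real.rpow_mul ht0.le,
        ENNReal.ofReal_mul (by positivity), mul_neg, mul_comm q]
    rw [setLIntegral_congr_fun measurableSet_Ioi h_pow,
      lintegral_const_mul' _ _ ENNReal.ofReal_ne_top, lintegral_Ioi_rpow_of_lt (by linarith) ht₀,
      ← ENNReal.ofReal_mul (by positivity)]
  have h_sum : t₀ * a ^ (-p) + c ^ (-p) * (t₀ ^ (-(p * q) + 1) / -(-(p * q) + 1)) =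
      p * q / (p * q - 1) * t₀ * a ^ (-p) := by
    have h_tail : c ^ (-p) * t₀ ^ (-(p * q)) = a ^ (-p) := by
      rw [← Real.rpow_mul (by positivity), show q⁻¹ * -(p * q) = -p by field_simp,
        Real.div_rpow ha.le hc.le, Real.rpow_neg hc.le]
      have : c ^ p ≠ 0 := by positivity
      field_simp
    have : p * q - 1 ≠ 0 := by linarith
    rw [Real.rpow_add_one ht₀.ne', mul_div_assoc', ← mul_assoc, h_tail, neg_add, neg_neg,
      ← sub_eq_add_neg]
    field_simp
    ring
  rw [← Ioc_union_Ioi_eq_Ioi ht₀.le, lintegral_union measurableSet_Ioi Ioc_disjoint_Ioi_same,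
    h_near, h_far, ← ENNReal.ofReal_add (by positivity)
      (mul_nonneg (by positivity) (div_nonneg (by positivity) (by linarith))), h_sum]

noncomputable def cappedPowerDecay (a c p q t : ℝ) : ℝ≥0∞ :=
  ENNReal.ofReal (max a (c * |t| ^ q) ^ (-p))

theorem measurable_cappedPowerDecay (a c p q : ℝ) : Measurable (cappedPowerDecay a c p q) := by
  unfold cappedPowerDecay
  fun_prop

theorem lintegral_cappedPowerDecay {a c p q : ℝ} (ha : 0 < a) (hc : 0 < c) (hq : 0 < q)
    (hpq : 1 < p * q) :
    ∫⁻ t, cappedPowerDecay a c p q t =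
      ENNReal.ofReal (2 * (p * q / (p * q - 1) * (a / c) ^ q⁻¹ * a ^ (-p))) := by
  rw [ENNReal.ofReal_mul zero_le_two, ENNReal.ofReal_ofNat,
    ← lintegral_Ioi_max_rpow_neg ha hc hq hpq,
    ← lintegral_comp_abs (fun t ↦ ENNReal.ofReal (max a (c * t ^ q) ^ (-p)))]
  rfl

theorem ofReal_rpow_neg_le_cappedPowerDecay {a c p q t u : ℝ} (ha : 0 < a) (hp : 0 ≤ p)
    (hau : a ≤ u) (htu : c * |t| ^ q ≤ u) :
    ENNReal.ofReal (u ^ (-p)) ≤ cappedPowerDecay a c p q t :=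
  ENNReal.ofReal_le_ofReal <|
    Real.rpow_le_rpow_of_nonpos (lt_max_of_lt_left ha) (max_le hau htu) (neg_nonpos.2 hp)

theorem lintegral_euclideanSpace_mul_prod_succ (m : ℕ) {f g : ℝ → ℝ≥0∞} (hf : Measurable f)
    (hg : Measurable g) :
    ∫⁻ x : EuclideanSpace ℝ (Fin (m + 1)), f (x 0) * ∏ j : Fin m, g (x j.succ) =
      (∫⁻ t, f t) * (∫⁻ t, g t) ^ m := by
  let φ : Fin (m + 1) → ℝ → ℝ≥0∞ := Fin.cons f fun _ ↦ g
  have hφ : ∀ i, Measurable (φ i) := Fin.cases hf fun _ ↦ hg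
  calc ∫⁻ x : EuclideanSpace ℝ (Fin (m + 1)), f (x 0) * ∏ j : Fin m, g (x j.succ)
      = ∫⁻ y : Fin (m + 1) → ℝ, ∏ i, φ i (y i) := by
        rw [← (EuclideanSpace.volume_preserving_symm_measurableEquiv_toLp _).lintegral_comp_emb
          (MeasurableEquiv.measurableEmbedding _)]
        simp [φ, Fin.prod_univ_succ]
    _ = ∏ i, ∫⁻ t, φ i t := lintegral_fin_prod_eq_prod φ hφ
    _ = (∫⁻ t, f t) * (∫⁻ t, g t) ^ m := by simp [φ, Fin.prod_univ_succ]

theorem sq_add_sq_le_norm_sq {ι : Type*} [Fintype ι] (x : EuclideanSpace ℝ ι) {i j : ι}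
    (hij : i ≠ j) : x i ^ 2 + x j ^ 2 ≤ ‖x‖ ^ 2 := by
  classical
  simp only [EuclideanSpace.norm_sq_eq, Real.norm_eq_abs, sq_abs]
  rw [← Finset.sum_pair hij (f := fun k ↦ x k ^ 2)]
  exact Finset.sum_le_sum_of_subset_of_nonneg (Finset.subset_univ _) fun k _ _ ↦ sq_nonneg _

theorem abs_apply_lt_of_mem_ball {ι : Type*} [Fintype ι] {x : EuclideanSpace ℝ ι} {b : ℝ}
    (hx : x ∈ Metric.ball 0 b) (i : ι) : |x i| < b :=
  (PiLp.norm_apply_le x i).trans_lt (mem_ball_zero_iff.1 hx)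

theorem mul_one_sub_le_add_mul {b β t : ℝ} (hβ : 0 ≤ β) (ht : |t| < b) :
    b * (1 - β) ≤ b + β * t := by
  nlinarith [abs_lt.1 ht]

theorem add_le_two_mul_add_mul {b β t : ℝ} (hβ₀ : 0 ≤ β) (hβ₁ : β ≤ 1) (ht : |t| < b) :
    b + t ≤ 2 * (b + β * t) := by
  nlinarith [abs_lt.1 ht]

theorem sq_le_four_mul_add_mul {b β t y : ℝ} (hβ₀ : 0 ≤ β) (hβ₁ : β ≤ 1) (ht : |t| < b)
    (hty : t ^ 2 + y ^ 2 ≤ b ^ 2) : y ^ 2 ≤ 4 * b * (b + β * t) := by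
  nlinarith [abs_lt.1 ht, mul_le_mul_of_nonneg_left (add_le_two_mul_add_mul hβ₀ hβ₁ ht)
    (by linarith [abs_lt.1 ht] : 0 ≤ b - t)]

theorem ofReal_rpow_neg_le_prod {m : ℕ} {σ₁ s b β : ℝ} (hσ₁ : 0 ≤ σ₁) (hs : 0 ≤ s)
    (hβ₀ : 0 ≤ β) (hβ₁ : β < 1) {x : EuclideanSpace ℝ (Fin (m + 1))} (hx : x ∈ Metric.ball 0 b) :
    ENNReal.ofReal ((b + β * x 0) ^ (-(σ₁ + m * s))) ≤
      cappedPowerDecay (b * (1 - β)) 2⁻¹ σ₁ 1 (b + x 0) *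
        ∏ j : Fin m, cappedPowerDecay (b * (1 - β)) (4 * b)⁻¹ s 2 (x j.succ) := by
  have ht := abs_apply_lt_of_mem_ball hx 0
  have hb : 0 < b := (abs_nonneg _).trans_lt ht
  have hA : 0 < b * (1 - β) := mul_pos hb (by linarith)
  have hAu := mul_one_sub_le_add_mul hβ₀ ht
  set u := b + β * x 0
  have hu : 0 < u := hA.trans_le hAu
  have h_split : ENNReal.ofReal (u ^ (-(σ₁ + m * s))) =
      ENNReal.ofReal (u ^ (-σ₁)) * ENNReal.ofReal (u ^ (-s)) ^ m := by
    rw [← ENNReal.ofReal_pow (by positivity), ← ENNReal.ofReal_mul (by positivity),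
      ← Real.rpow_mul_natCast hu.le, ← Real.rpow_add hu, neg_add, neg_mul, mul_comm]
  rw [h_split]
  gcongr ?_ * ?_
  · refine ofReal_rpow_neg_le_cappedPowerDecay hA hσ₁ hAu ?_
    rw [Real.rpow_one, abs_of_pos (by linarith [abs_lt.1 ht])]
    linarith [add_le_two_mul_add_mul hβ₀ hβ₁.le ht]
  · have hx_sq : ‖x‖ ^ 2 ≤ b ^ 2 := pow_le_pow_left₀ (norm_nonneg _) (mem_ball_zero_iff.1 hx).le 2
    calc ENNReal.ofReal (u ^ (-s)) ^ m = ∏ _j : Fin m, ENNReal.ofReal (u ^ (-s)) := by simp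
      _ ≤ _ := Finset.prod_le_prod' fun j _ ↦ by
        refine ofReal_rpow_neg_le_cappedPowerDecay hA hs hAu ?_
        rw [Real.rpow_two, sq_abs, inv_mul_le_iff₀ (by positivity)]
        exact sq_le_four_mul_add_mul hβ₀ hβ₁.le ht
          ((sq_add_sq_le_norm_sq x (Fin.succ_ne_zero j).symm).trans hx_sq)

theorem lintegral_ball_rpow_neg_le (m : ℕ) {σ₁ s b β : ℝ} (hσ₁ : 1 < σ₁) (hs : 2⁻¹ < s)
    (hb : 0 < b) (hβ₀ : 0 ≤ β) (hβ₁ : β < 1) :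
    ∫⁻ x in Metric.ball (0 : EuclideanSpace ℝ (Fin (m + 1))) b,
        ENNReal.ofReal ((b + β * x 0) ^ (-(σ₁ + m * s))) ≤
      ENNReal.ofReal (4 * σ₁ / (σ₁ - 1) * (b * (1 - β)) ^ (1 - σ₁) *
        (8 * s / (2 * s - 1) * b ^ (2⁻¹ : ℝ) * (b * (1 - β)) ^ (2⁻¹ - s)) ^ m) := by
  set A := b * (1 - β)
  have hA : 0 < A := mul_pos hb (by linarith)
  have h_first : ∫⁻ t, cappedPowerDecay A 2⁻¹ σ₁ 1 (b + t) =
      ENNReal.ofReal (4 * σ₁ / (σ₁ - 1) * A ^ (1 - σ₁)) := by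
    rw [lintegral_add_left_eq_self (cappedPowerDecay A 2⁻¹ σ₁ 1) b,
      lintegral_cappedPowerDecay hA (by norm_num) one_pos (by simpa using hσ₁)]
    congr 1
    have : σ₁ - 1 ≠ 0 := by linarith
    rw [inv_one, Real.rpow_one, Real.rpow_sub hA, Real.rpow_one, Real.rpow_neg hA.le]
    field_simp
    ring
  have h_rest : ∫⁻ t, cappedPowerDecay A (4 * b)⁻¹ s 2 t =
      ENNReal.ofReal (8 * s / (2 * s - 1) * b ^ (2⁻¹ : ℝ) * A ^ (2⁻¹ - s)) := by
    rw [lintegral_cappedPowerDecay hA (by positivity) two_pos (by linarith)]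
    congr 1
    have h_four : (4 : ℝ) ^ (2⁻¹ : ℝ) = 2 := by
      rw [show (4 : ℝ) = 2 ^ (2 : ℝ) by norm_num, ← Real.rpow_mul zero_le_two]
      norm_num
    rw [div_inv_eq_mul, mul_comm A, Real.mul_rpow (by positivity) hA.le,
      Real.mul_rpow zero_le_four hb.le, h_four, Real.rpow_sub hA, Real.rpow_neg hA.le]
    have : 2 * s - 1 ≠ 0 := by linarith
    field_simp
    ring
  have h_first_nonneg : 0 ≤ 4 * σ₁ / (σ₁ - 1) * A ^ (1 - σ₁) :=
    mul_nonneg (div_nonneg (by linarith) (by linarith)) (by positivity)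
  have h_rest_nonneg : 0 ≤ 8 * s / (2 * s - 1) * b ^ (2⁻¹ : ℝ) * A ^ (2⁻¹ - s) :=
    mul_nonneg (mul_nonneg (div_nonneg (by linarith) (by linarith)) (by positivity)) (by positivity)
  calc ∫⁻ x in Metric.ball (0 : EuclideanSpace ℝ (Fin (m + 1))) b,
        ENNReal.ofReal ((b + β * x 0) ^ (-(σ₁ + m * s)))
      ≤ ∫⁻ x in Metric.ball (0 : EuclideanSpace ℝ (Fin (m + 1))) b,
          cappedPowerDecay A 2⁻¹ σ₁ 1 (b + x 0) *
            ∏ j : Fin m, cappedPowerDecay A (4 * b)⁻¹ s 2 (x j.succ) :=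
        setLIntegral_mono' measurableSet_ball fun x hx ↦
          ofReal_rpow_neg_le_prod (by linarith) (by linarith) hβ₀ hβ₁ hx
    _ ≤ ∫⁻ x : EuclideanSpace ℝ (Fin (m + 1)), cappedPowerDecay A 2⁻¹ σ₁ 1 (b + x 0) *
            ∏ j : Fin m, cappedPowerDecay A (4 * b)⁻¹ s 2 (x j.succ) :=
        setLIntegral_le_lintegral _ _
    _ = _ := by
      rw [lintegral_euclideanSpace_mul_prod_succ m
          (f := fun t ↦ cappedPowerDecay A 2⁻¹ σ₁ 1 (b + t))
          ((measurable_cappedPowerDecay _ _ _ _).comp (measurable_const_add b))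
          (measurable_cappedPowerDecay _ _ _ _),
        h_first, h_rest, ← ENNReal.ofReal_pow h_rest_nonneg, ← ENNReal.ofReal_mul h_first_nonneg]

theorem one_sub_rpow_le {β e : ℝ} (hβ₀ : 0 ≤ β) (hβ₁ : β < 1) (he : e ≤ 0) :
    (1 - β) ^ e ≤ 2 ^ (-e) * (1 - β ^ 2) ^ e := by
  have h_pos : 0 < 1 - β ^ 2 := by nlinarith
  have h_lower : 0 < (1 - β ^ 2) / 2 := by positivity
  calc (1 - β) ^ e ≤ ((1 - β ^ 2) / 2) ^ e :=
        Real.rpow_le_rpow_of_nonpos h_lower (by nlinarith) he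
    _ = 2 ^ (-e) * (1 - β ^ 2) ^ e := by
        rw [Real.div_rpow h_pos.le zero_le_two, Real.rpow_neg zero_le_two,
          div_eq_inv_mul]

theorem rpow_mul_rpow_pow {a b σ₁ s : ℝ} (ha : 0 < a) (hb : 0 < b) (m : ℕ) :
    a ^ (1 - σ₁) * (b ^ (2⁻¹ : ℝ) * a ^ (2⁻¹ - s)) ^ m =
      b ^ ((m : ℝ) / 2) * a ^ (((m : ℝ) + 1 + 1) / 2 - (σ₁ + m * s)) := by
  rw [mul_pow, ← Real.rpow_mul_natCast hb.le, ← Real.rpow_mul_natCast ha.le, mul_left_comm,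
    ← Real.rpow_add ha]
  congr 2 <;> ring

theorem exists_exponent_split {m : ℕ} {σ : ℝ} (hσ : ((m : ℝ) + 1 + 1) / 2 < σ) :
    ∃ σ₁ s : ℝ, 1 < σ₁ ∧ 2⁻¹ < s ∧ σ₁ + m * s = σ := by
  set d := (σ - ((m : ℝ) + 1 + 1) / 2) / (m + 1)
  have hd : 0 < d := div_pos (by linarith) (by positivity)
  refine ⟨1 + d, 2⁻¹ + d, by linarith, by linarith, ?_⟩
  simp only [d]
  field_simp
  ring

theorem rpow_mul_rpow_pow_le {m : ℕ} {σ₁ s b β : ℝ} (hb : 0 < b) (hβ₀ : 0 ≤ β) (hβ₁ : β < 1)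
    (hσ : ((m : ℝ) + 1 + 1) / 2 ≤ σ₁ + m * s) :
    (b * (1 - β)) ^ (1 - σ₁) * (b ^ (2⁻¹ : ℝ) * (b * (1 - β)) ^ (2⁻¹ - s)) ^ m ≤
      2 ^ (-(((m : ℝ) + 1 + 1) / 2 - (σ₁ + m * s))) * b ^ ((m : ℝ) + 1 - (σ₁ + m * s)) *
        (1 - β ^ 2) ^ (((m : ℝ) + 1 + 1 - 2 * (σ₁ + m * s)) / 2) := by
  set e := ((m : ℝ) + 1 + 1) / 2 - (σ₁ + m * s)
  have h_one_sub : 0 < 1 - β := by linarith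
  calc (b * (1 - β)) ^ (1 - σ₁) * (b ^ (2⁻¹ : ℝ) * (b * (1 - β)) ^ (2⁻¹ - s)) ^ m
      = b ^ ((m : ℝ) / 2) * b ^ e * (1 - β) ^ e := by
        rw [rpow_mul_rpow_pow (mul_pos hb h_one_sub) hb, Real.mul_rpow hb.le h_one_sub.le,
          mul_assoc]
    _ ≤ b ^ ((m : ℝ) / 2) * b ^ e * (2 ^ (-e) * (1 - β ^ 2) ^ e) := by
        gcongr
        exact one_sub_rpow_le hβ₀ hβ₁ (sub_nonpos.2 hσ)
    _ = _ := by
        rw [← Real.rpow_add hb, show (m : ℝ) / 2 + e = m + 1 - (σ₁ + m * s) by ring,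
          show ((m : ℝ) + 1 + 1 - 2 * (σ₁ + m * s)) / 2 = e by ring]
        ring

/-- For `n ≥ 1` and `σ > (n+1)/2` there is `C > 0` (depending only on `n, σ`) such that for all
`β ∈ (1/2, 1)` and `b ∈ (0,1)`:
`∫_{‖x‖ < b} (b + β x₁)^{-σ} dx ≤ C b^{n-σ} (1-β²)^{(n+1-2σ)/2}`. -/
theorem sobolev_data_estimate
    (n : ℕ) (hn : 0 < n) (σ : ℝ) (hσ : ((n : ℝ) + 1) / 2 < σ) :
    ∃ C > (0 : ℝ), ∀ β ∈ Set.Ioo (1/2 : ℝ) 1, ∀ b ∈ Set.Ioo (0 : ℝ) 1,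
      ∫⁻ x in Metric.ball (0 : EuclideanSpace ℝ (Fin n)) b,
        ENNReal.ofReal ((b + β * x ⟨0, hn⟩) ^ (-σ))
      ≤ ENNReal.ofReal
          (C * b ^ ((n : ℝ) - σ) * (1 - β ^ 2) ^ (((n : ℝ) + 1 - 2 * σ) / 2)) := by
  obtain ⟨m, rfl⟩ := Nat.exists_eq_add_one_of_ne_zero hn.ne'
  push_cast at hσ ⊢
  obtain ⟨σ₁, s, hσ₁, hs, rfl⟩ := exists_exponent_split hσ
  have hK₀ : 0 < 4 * σ₁ / (σ₁ - 1) := div_pos (by linarith) (by linarith)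
  have hK₁ : 0 < 8 * s / (2 * s - 1) := div_pos (by linarith) (by linarith)
  refine ⟨4 * σ₁ / (σ₁ - 1) * (8 * s / (2 * s - 1)) ^ m *
    2 ^ (-(((m : ℝ) + 1 + 1) / 2 - (σ₁ + m * s))), by positivity, fun β hβ b hb ↦ ?_⟩
  have hβ₀ : 0 ≤ β := by linarith [hβ.1]
  refine (lintegral_ball_rpow_neg_le m hσ₁ hs hb.1 hβ₀ hβ.2).trans (ENNReal.ofReal_le_ofReal ?_)
  have h_real := mul_le_mul_of_nonneg_left (rpow_mul_rpow_pow_le (m := m) hb.1 hβ₀ hβ.2 hσ.le)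
    (by positivity : 0 ≤ 4 * σ₁ / (σ₁ - 1) * (8 * s / (2 * s - 1)) ^ m)
  exact Eq.trans_le (by ring) (h_real.trans_eq (by ring))
end

section
/- Let n ≥ 1 be an integer and let u : ℝ × ℝⁿ → ℝ be twice continuously differentiable. Define w = 1 - e^{-u/2}. Then for all (t,x): ∂²_t w - Δ_x w = (1/2)·e^{-u/2}·( ∂²_t u - Δ_x u + (1/2)|∇_x u|² - (1/2)(∂_t u)² ). In particular, if u satisfies ∂²_t u - Δ_x u = (∂_t u)², then ∂²_t w - Δ_x w = (1/4)·e^{-u/2}·( (∂_t u)² + |∇_x u|² ), which is nonnegative. -/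
open Set

/-- Partial derivative in the time variable of `u : ℝ → (Fin n → ℝ) → ℝ`. -/
noncomputable def partialT (n : ℕ) (u : ℝ → (Fin n → ℝ) → ℝ) : ℝ → (Fin n → ℝ) → ℝ :=
  fun t x => deriv (fun s => u s x) t

/-- Partial derivative in the `i`-th spatial variable of `u : ℝ → (Fin n → ℝ) → ℝ`. -/
noncomputable def partialX (n : ℕ) (i : Fin n) (u : ℝ → (Fin n → ℝ) → ℝ) :
    ℝ → (Fin n → ℝ) → ℝ :=
  fun t x => deriv (fun s => u t (Function.update x i s)) (x i)

/-!
Write `w = φ ∘ u` with `φ y = 1 - e^{-y/2}`. The one-variable chain rule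
`(φ ∘ g)'' = φ'(g) g'' + φ''(g) g'²`, applied along each coordinate line, gives
`□w = φ'(u) □u + φ''(u) (u_t² - |∇_x u|²)`, and `φ' = ½ e^{-y/2}`, `φ'' = -¼ e^{-y/2}`.
If moreover `□u = u_t²`, the `u_t²` terms combine to `¼ e^{-u/2} (u_t² + |∇_x u|²)`.
-/

theorem deriv_deriv_comp_of_contDiff {f g : ℝ → ℝ} (hf : ContDiff ℝ 2 f) (hg : ContDiff ℝ 2 g)
    (a : ℝ) :
    deriv (deriv (f ∘ g)) a
      = deriv f (g a) * deriv (deriv g) a + deriv (deriv f) (g a) * deriv g a ^ 2 := by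
  have hf' : ContDiff ℝ 1 (deriv f) := (contDiff_succ_iff_deriv.mp hf).2.2
  have hg' : ContDiff ℝ 1 (deriv g) := (contDiff_succ_iff_deriv.mp hg).2.2
  have hfd : Differentiable ℝ f := hf.differentiable two_ne_zero
  have hgd : Differentiable ℝ g := hg.differentiable two_ne_zero
  have hchain : deriv (f ∘ g) = fun s => deriv f (g s) * deriv g s :=
    funext fun s => deriv_comp s (hfd (g s)) (hgd s)
  have hderiv : HasDerivAt (fun s => deriv f (g s) * deriv g s)
      (deriv (deriv f) (g a) * deriv g a * deriv g a + deriv f (g a) * deriv (deriv g) a) a :=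
    (((hf'.differentiable one_ne_zero) (g a)).hasDerivAt.comp a (hgd a).hasDerivAt).mul
      ((hg'.differentiable one_ne_zero) a).hasDerivAt
  rw [hchain, hderiv.deriv]
  ring

noncomputable def dAlembertian (n : ℕ) (u : ℝ → (Fin n → ℝ) → ℝ) : ℝ → (Fin n → ℝ) → ℝ :=
  fun t x => partialT n (partialT n u) t x - ∑ i, partialX n i (partialX n i u) t x

section Slices

variable {n : ℕ} {u : ℝ → (Fin n → ℝ) → ℝ}

theorem partialX_partialX_apply (i : Fin n) (t : ℝ) (x : Fin n → ℝ) :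
    partialX n i (partialX n i u) t x
      = deriv (deriv fun s => u t (Function.update x i s)) (x i) := by
  simp only [partialX, Function.update_idem, Function.update_self]

theorem contDiff_timeSlice (hu : ContDiff ℝ 2 (fun q : ℝ × (Fin n → ℝ) => u q.1 q.2))
    (x : Fin n → ℝ) : ContDiff ℝ 2 (fun s => u s x) :=
  hu.comp (contDiff_id.prodMk contDiff_const)

theorem contDiff_spaceSlice (hu : ContDiff ℝ 2 (fun q : ℝ × (Fin n → ℝ) => u q.1 q.2))
    (t : ℝ) (x : Fin n → ℝ) (i : Fin n) :
    ContDiff ℝ 2 (fun s => u t (Function.update x i s)) :=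
  hu.comp (contDiff_const.prodMk (contDiff_update 2 x i))

theorem dAlembertian_comp (hu : ContDiff ℝ 2 (fun q : ℝ × (Fin n → ℝ) => u q.1 q.2))
    {φ : ℝ → ℝ} (hφ : ContDiff ℝ 2 φ) (t : ℝ) (x : Fin n → ℝ) :
    dAlembertian n (fun t x => φ (u t x)) t x
      = deriv φ (u t x) * dAlembertian n u t x
        + deriv (deriv φ) (u t x)
          * (partialT n u t x ^ 2 - ∑ i, partialX n i u t x ^ 2) := by
  have htime : partialT n (partialT n fun t x => φ (u t x)) t x
      = deriv φ (u t x) * partialT n (partialT n u) t x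
        + deriv (deriv φ) (u t x) * partialT n u t x ^ 2 :=
    deriv_deriv_comp_of_contDiff hφ (contDiff_timeSlice hu x) t
  have hspace : ∀ i, partialX n i (partialX n i fun t x => φ (u t x)) t x
      = deriv φ (u t x) * partialX n i (partialX n i u) t x
        + deriv (deriv φ) (u t x) * partialX n i u t x ^ 2 := fun i => by
    rw [partialX_partialX_apply, partialX_partialX_apply]
    have hchain := deriv_deriv_comp_of_contDiff hφ (contDiff_spaceSlice hu t x i) (x i)
    rw [Function.update_eq_self] at hchain
    exact hchain
  simp only [dAlembertian, htime, hspace, Finset.sum_add_distrib, ← Finset.mul_sum]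
  ring

end Slices

theorem deriv_one_sub_exp_neg_half :
    deriv (fun y : ℝ => 1 - Real.exp (-y / 2)) = fun y => Real.exp (-y / 2) / 2 := by
  funext y
  exact ((((hasDerivAt_id y).neg.div_const 2).exp).const_sub 1).deriv.trans (by simp only [Pi.neg_apply, id_eq]; ring)

theorem deriv_exp_neg_half_div_two :
    deriv (fun y : ℝ => Real.exp (-y / 2) / 2) = fun y => -Real.exp (-y / 2) / 4 := by
  funext y
  exact (((hasDerivAt_id y).neg.div_const 2).exp.div_const 2).deriv.trans (by simp only [Pi.neg_apply, id_eq]; ring)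

theorem substitution_wave_identity_general
    (n : ℕ) (u : ℝ → (Fin n → ℝ) → ℝ)
    (hu : ContDiff ℝ 2 (fun q : ℝ × (Fin n → ℝ) => u q.1 q.2))
    (w : ℝ → (Fin n → ℝ) → ℝ)
    (hw : ∀ t x, w t x = 1 - Real.exp (-(u t x) / 2)) :
    (∀ (t : ℝ) (x : Fin n → ℝ),
      partialT n (partialT n w) t x - ∑ i, partialX n i (partialX n i w) t x
        = (1/2) * Real.exp (-(u t x) / 2)
          * (partialT n (partialT n u) t x - ∑ i, partialX n i (partialX n i u) t x
            + (1/2) * ∑ i, (partialX n i u t x) ^ 2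
            - (1/2) * (partialT n u t x) ^ 2)) ∧
    ((∀ (t : ℝ) (x : Fin n → ℝ),
        partialT n (partialT n u) t x - ∑ i, partialX n i (partialX n i u) t x
          = (partialT n u t x) ^ 2) →
      ∀ (t : ℝ) (x : Fin n → ℝ),
        partialT n (partialT n w) t x - ∑ i, partialX n i (partialX n i w) t x
          = (1/4) * Real.exp (-(u t x) / 2)
            * ((partialT n u t x) ^ 2 + ∑ i, (partialX n i u t x) ^ 2) ∧
        0 ≤ (1/4) * Real.exp (-(u t x) / 2)
            * ((partialT n u t x) ^ 2 + ∑ i, (partialX n i u t x) ^ 2)) := by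
  have hw_comp : w = fun t x => 1 - Real.exp (-(u t x) / 2) := funext₂ hw
  have hφ : ContDiff ℝ 2 fun y : ℝ => 1 - Real.exp (-y / 2) := by fun_prop
  have hwave (t : ℝ) (x : Fin n → ℝ) : dAlembertian n w t x
      = 1/2 * Real.exp (-(u t x) / 2) * (dAlembertian n u t x
        + 1/2 * ∑ i, partialX n i u t x ^ 2 - 1/2 * partialT n u t x ^ 2) := by
    rw [hw_comp, dAlembertian_comp hu hφ, deriv_one_sub_exp_neg_half, deriv_exp_neg_half_div_two]
    ring
  refine ⟨hwave, fun hu_wave t x => ⟨?_, by positivity⟩⟩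
  have hu_wave' : dAlembertian n u t x = partialT n u t x ^ 2 := hu_wave t x
  change dAlembertian n w t x = _
  rw [hwave, hu_wave']
  ring

/-- Substitution `w = 1 - e^{-u/2}`: for `u` twice continuously differentiable,
`∂²_t w - Δ_x w = (1/2) e^{-u/2} (∂²_t u - Δ_x u + (1/2)|∇_x u|² - (1/2)(∂_t u)²)`; in
particular, if `∂²_t u - Δ_x u = (∂_t u)²`, then
`∂²_t w - Δ_x w = (1/4) e^{-u/2} ((∂_t u)² + |∇_x u|²) ≥ 0`. -/
theorem substitution_wave_identity
    (n : ℕ) (hn : 1 ≤ n) (u : ℝ → (Fin n → ℝ) → ℝ)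
    (hu : ContDiff ℝ 2 (fun q : ℝ × (Fin n → ℝ) => u q.1 q.2))
    (w : ℝ → (Fin n → ℝ) → ℝ)
    (hw : ∀ t x, w t x = 1 - Real.exp (-(u t x) / 2)) :
    (∀ (t : ℝ) (x : Fin n → ℝ),
      partialT n (partialT n w) t x - ∑ i, partialX n i (partialX n i w) t x
        = (1/2) * Real.exp (-(u t x) / 2)
          * (partialT n (partialT n u) t x - ∑ i, partialX n i (partialX n i u) t x
            + (1/2) * ∑ i, (partialX n i u t x) ^ 2
            - (1/2) * (partialT n u t x) ^ 2)) ∧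
    ((∀ (t : ℝ) (x : Fin n → ℝ),
        partialT n (partialT n u) t x - ∑ i, partialX n i (partialX n i u) t x
          = (partialT n u t x) ^ 2) →
      ∀ (t : ℝ) (x : Fin n → ℝ),
        partialT n (partialT n w) t x - ∑ i, partialX n i (partialX n i w) t x
          = (1/4) * Real.exp (-(u t x) / 2)
            * ((partialT n u t x) ^ 2 + ∑ i, (partialX n i u t x) ^ 2) ∧
        0 ≤ (1/4) * Real.exp (-(u t x) / 2)
            * ((partialT n u t x) ^ 2 + ∑ i, (partialX n i u t x) ^ 2)) :=
  substitution_wave_identity_general n u hu w hw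
end
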